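/- arXiv:1908.05220 — 11 statements merged into one kernel-verified Lean document; each statement's English description precedes it below -/
import Mathlib

section
/- If A, B, C are finite sets of natural numbers with A = B + C (sumset), min(A) = 0, max(A) ≤ k, and max(B) ≤ max(C), then defining C_B = C ∪ {s ∈ [0,k] \ A : s < max(B)} ∪ {s - max(B) : s ∈ [0,k] \ A, s ≥ max(B)}, we have B + C_B = {0, 1, ..., k}. -/
/-
Every `t ≤ k` is reached: elements of `A = B + C` already are, a missing `t < max B` is
`0 + t`, and a missing `t ≥ max B` is `max B + (t - max B)` (here `0 ∈ B` because `0 ∈ A`).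
Conversely no new sum exceeds `k`: for `b ≤ max B`, a new element `t < max B` gives
`b + t < 2 max B ≤ max B + max C ≤ k`, and a shifted one gives `b + (t - max B) ≤ t ≤ k`.
-/

open Pointwise

/-- The `k`-promotion of a factor: given the other factor's max `m`, append to `S`
each missing element `s ∈ [0,k] \ A` with `s < m`, and `s - m` for `s ≥ m`. -/
def promote (k : ℕ) (A S : Finset ℕ) (m : ℕ) : Finset ℕ :=
  S ∪ ((Finset.range (k + 1) \ A).filter (· < m)) ∪
    (((Finset.range (k + 1) \ A).filter (m ≤ ·)).image (· - m))

namespace Finset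

lemma zero_mem_left_of_zero_mem_add {B C : Finset ℕ} (h : 0 ∈ B + C) : 0 ∈ B := by
  obtain ⟨b, hb, c, -, hbc⟩ := mem_add.1 h
  rwa [Nat.eq_zero_of_add_eq_zero_right hbc] at hb

lemma range_subset_add_promote {k m : ℕ} {A B S : Finset ℕ} (hA : A ⊆ B + S)
    (h0 : 0 ∈ B) (hm : m ∈ B) : range (k + 1) ⊆ B + promote k A S m := by
  intro t ht
  have hS : S ⊆ promote k A S m := subset_union_left.trans subset_union_left
  by_cases htA : t ∈ A
  · exact add_subset_add_left hS (hA htA)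
  have hmiss : t ∈ range (k + 1) \ A := mem_sdiff.2 ⟨ht, htA⟩
  by_cases htm : t < m
  · refine mem_add.2 ⟨0, h0, t, ?_, zero_add t⟩
    exact mem_union_left _ (mem_union_right _ (mem_filter.2 ⟨hmiss, htm⟩))
  · refine mem_add.2 ⟨m, hm, t - m, ?_, by omega⟩
    exact mem_union_right _ (mem_image_of_mem _ (mem_filter.2 ⟨hmiss, by omega⟩))

lemma add_promote_subset_range {k m : ℕ} {A B S : Finset ℕ} (hBS : ∀ x ∈ B + S, x ≤ k)
    (hB : ∀ b ∈ B, b ≤ m) (hmk : 2 * m ≤ k) : B + promote k A S m ⊆ range (k + 1) := by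
  rintro _ hx
  obtain ⟨b, hb, s, hs, rfl⟩ := mem_add.1 hx
  have hbm := hB b hb
  rw [mem_range]
  simp only [promote, mem_union, mem_filter, mem_image, mem_sdiff, mem_range] at hs
  rcases hs with (hsS | ⟨-, hsm⟩) | ⟨s', ⟨⟨hs'k, -⟩, hms'⟩, rfl⟩
  · exact Nat.lt_succ_of_le (hBS _ (add_mem_add hb hsS))
  · omega
  · omega

end Finset

theorem stmt0_general (k : ℕ) (A B C : Finset ℕ) (hB : B.Nonempty) (hC : C.Nonempty)
    (hsum : A = B + C) (h0 : 0 ∈ A)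
    (hmax : ∀ a ∈ A, a ≤ k)
    (hBC : B.max' hB ≤ C.max' hC) :
    B + promote k A C (B.max' hB) = Finset.range (k + 1) := by
  subst hsum
  have hmk : B.max' hB + C.max' hC ≤ k :=
    hmax _ (Finset.add_mem_add (B.max'_mem hB) (C.max'_mem hC))
  refine (Finset.add_promote_subset_range hmax (B.le_max' ·) (by omega)).antisymm ?_
  exact Finset.range_subset_add_promote subset_rfl
    (Finset.zero_mem_left_of_zero_mem_add h0) (B.max'_mem hB)

theorem stmt0 (k : ℕ) (A B C : Finset ℕ) (hB : B.Nonempty) (hC : C.Nonempty)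
    (hsum : A = B + C) (h0 : 0 ∈ A) (hmin : A.min' ⟨0, h0⟩ = 0)
    (hmax : ∀ a ∈ A, a ≤ k)
    (hBC : B.max' hB ≤ C.max' hC) :
    B + promote k A C (B.max' hB) = Finset.range (k + 1) :=
  stmt0_general k A B C hB hC hsum h0 hmax hBC
end

section
/- Let d(A) denote the number of sumset divisors of a nonempty finite set A ⊆ ℕ (sets B such that A = B + C for some C ⊆ ℕ). Then for any finite A ⊆ ℕ with r = min(A), d(A) = (r+1) · d(A - r), where A - r = {a - r : a ∈ A}. -/
open Pointwise

/-- The number of sumset divisors of a finite set of naturals. -/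
noncomputable def numDivisors (A : Finset ℕ) : ℕ :=
  {B : Finset ℕ | ∃ C : Finset ℕ, A = B + C}.ncard

/-!
Every nonempty finite `B ⊆ ℕ` is uniquely a translate `B₀ + {s}` with `0 ∈ B₀` (namely
`s = min B`). When `0 ∈ A`, every sumset divisor of `A` contains `0`, and `B₀ + {s}` divides
`A + {r}` exactly when `s ≤ r` and `B₀` divides `A`, since a translate can always be moved from
one summand to the other. Hence the divisors of `A + {r}` are in bijection with the pairs
`(s, B₀)` where `s ≤ r` and `B₀` divides `A`; apply this to `A = (A - r) + {r}`.
-/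

namespace Finset

theorem add_singleton_eq_image {α : Type*} [DecidableEq α] [Add α] (s : Finset α) (a : α) :
    s + {a} = s.image (· + a) :=
  image₂_singleton_right

theorem add_singleton_injective {α : Type*} [DecidableEq α] [Add α] [IsRightCancelAdd α]
    (a : α) : Function.Injective (· + ({a} : Finset α)) := by
  intro X Y h
  simp only [add_singleton_eq_image] at h
  exact image_injective (add_left_injective a) h

theorem le_of_mem_add_singleton {B : Finset ℕ} {s x : ℕ} (hx : x ∈ B + {s}) : s ≤ x := by
  rw [add_singleton_eq_image, mem_image] at hx
  obtain ⟨b, -, rfl⟩ := hx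
  exact Nat.le_add_left s b

theorem image_tsub_add_singleton {B : Finset ℕ} {s : ℕ} (h : ∀ b ∈ B, s ≤ b) :
    B.image (· - s) + {s} = B := by
  rw [add_singleton_eq_image, image_image]
  conv_rhs => rw [← image_id (s := B)]
  exact image_congr fun b hb => Nat.sub_add_cancel (h b hb)

theorem zero_mem_image_tsub {B : Finset ℕ} {s : ℕ} (hs : s ∈ B) : 0 ∈ B.image (· - s) :=
  mem_image.2 ⟨s, hs, Nat.sub_self s⟩

theorem exists_add_singleton_eq_of_nonempty {B : Finset ℕ} (hB : B.Nonempty) :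
    ∃ B₀ s, 0 ∈ B₀ ∧ B₀ + {s} = B :=
  ⟨_, _, zero_mem_image_tsub (B.min'_mem hB), image_tsub_add_singleton fun b => B.min'_le b⟩

theorem mem_add_singleton_of_zero_mem {B : Finset ℕ} (h : 0 ∈ B) (s : ℕ) : s ∈ B + {s} := by
  simpa using add_mem_add h (mem_singleton_self s)

theorem add_singleton_inj_of_zero_mem {B₀ B₁ : Finset ℕ} {s t : ℕ} (h₀ : 0 ∈ B₀)
    (h₁ : 0 ∈ B₁) (h : B₀ + {s} = B₁ + {t}) : B₀ = B₁ ∧ s = t := by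
  have hts : t ≤ s := le_of_mem_add_singleton (h ▸ mem_add_singleton_of_zero_mem h₀ s)
  have hst : s ≤ t := le_of_mem_add_singleton (h ▸ mem_add_singleton_of_zero_mem h₁ t)
  obtain rfl : s = t := le_antisymm hst hts
  exact ⟨add_singleton_injective s h, rfl⟩

end Finset

def IsSumsetDivisor (B A : Finset ℕ) : Prop := ∃ C, A = B + C

namespace IsSumsetDivisor

variable {A B : Finset ℕ}

theorem zero_mem (h : IsSumsetDivisor B A) (hA : 0 ∈ A) : 0 ∈ B := by
  obtain ⟨C, rfl⟩ := h
  obtain ⟨b, hb, c, -, hbc⟩ := Finset.mem_add.1 hA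
  rwa [(Nat.add_eq_zero_iff.1 hbc).1] at hb

theorem nonempty (h : IsSumsetDivisor B A) (hA : A.Nonempty) : B.Nonempty := by
  obtain ⟨C, rfl⟩ := h
  exact hA.of_add_left

theorem add_singleton (h : IsSumsetDivisor B A) {s t : ℕ} (hst : s ≤ t) :
    IsSumsetDivisor (B + {s}) (A + {t}) := by
  obtain ⟨C, rfl⟩ := h
  refine ⟨C + {t - s}, ?_⟩
  rw [add_add_add_comm, Finset.singleton_add_singleton, Nat.add_sub_cancel' hst]

end IsSumsetDivisor

theorem isSumsetDivisor_add_singleton_iff {A B : Finset ℕ} (hA : 0 ∈ A) (hB : 0 ∈ B) {s r : ℕ} :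
    IsSumsetDivisor (B + {s}) (A + {r}) ↔ s ≤ r ∧ IsSumsetDivisor B A := by
  refine ⟨fun ⟨C, hAC⟩ => ?_, fun ⟨hsr, h⟩ => h.add_singleton hsr⟩
  have hsr : s ≤ r := by
    obtain ⟨x, hx, c, -, rfl⟩ :=
      Finset.mem_add.1 (hAC ▸ Finset.mem_add_singleton_of_zero_mem hA r)
    have := Finset.le_of_mem_add_singleton hx
    omega
  have hC : ∀ c ∈ C, r - s ≤ c := fun c hc => by
    have := Finset.le_of_mem_add_singleton
      (hAC ▸ Finset.add_mem_add (Finset.mem_add_singleton_of_zero_mem hB s) hc)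
    omega
  refine ⟨hsr, C.image (· - (r - s)), Finset.add_singleton_injective r ?_⟩
  calc A + {r} = B + {s} + (C.image (· - (r - s)) + {r - s}) := by
        rw [hAC, Finset.image_tsub_add_singleton hC]
    _ = B + C.image (· - (r - s)) + {r} := by
        rw [add_add_add_comm, Finset.singleton_add_singleton, Nat.add_sub_cancel' hsr]

def sumsetDivisors (A : Finset ℕ) : Set (Finset ℕ) := {B | IsSumsetDivisor B A}

theorem numDivisors_eq_card_sumsetDivisors (A : Finset ℕ) :
    numDivisors A = Nat.card (sumsetDivisors A) :=
  (Nat.card_coe_set_eq _).symm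

theorem card_sumsetDivisors_add_singleton {A : Finset ℕ} (hA : 0 ∈ A) (r : ℕ) :
    Nat.card (sumsetDivisors (A + {r})) = (r + 1) * Nat.card (sumsetDivisors A) := by
  let g : Fin (r + 1) × sumsetDivisors A → sumsetDivisors (A + {r}) := fun ⟨s, B⟩ =>
    ⟨B + {(s : ℕ)}, (isSumsetDivisor_add_singleton_iff hA (IsSumsetDivisor.zero_mem B.2 hA)).2
      ⟨Nat.le_of_lt_succ s.2, B.2⟩⟩
  have hg : Function.Bijective g := by
    refine ⟨fun ⟨s, B⟩ ⟨t, B'⟩ h => ?_, fun ⟨B, hB⟩ => ?_⟩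
    · obtain ⟨hBB', hst⟩ := Finset.add_singleton_inj_of_zero_mem
        (IsSumsetDivisor.zero_mem B.2 hA) (IsSumsetDivisor.zero_mem B'.2 hA)
        (congrArg Subtype.val h)
      rw [Fin.ext hst, Subtype.ext hBB']
    · obtain ⟨B₀, s, hB₀, rfl⟩ := Finset.exists_add_singleton_eq_of_nonempty
        (IsSumsetDivisor.nonempty hB ⟨r, Finset.mem_add_singleton_of_zero_mem hA r⟩)
      obtain ⟨hsr, hdiv⟩ := (isSumsetDivisor_add_singleton_iff hA hB₀).1 hB
      exact ⟨(⟨s, Nat.lt_succ_of_le hsr⟩, ⟨B₀, hdiv⟩), rfl⟩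
  rw [← Nat.card_eq_of_bijective g hg, Nat.card_prod, Nat.card_fin]

theorem stmt5 (A : Finset ℕ) (hA : A.Nonempty) (r : ℕ) (hr : r = A.min' hA) :
    numDivisors A = (r + 1) * numDivisors (A.image (· - r)) := by
  have hrA : r ∈ A := hr ▸ A.min'_mem hA
  have hshift : A.image (· - r) + {r} = A :=
    Finset.image_tsub_add_singleton fun a ha => hr ▸ A.min'_le a ha
  conv_lhs => rw [← hshift]
  rw [numDivisors_eq_card_sumsetDivisors, numDivisors_eq_card_sumsetDivisors]
  exact card_sumsetDivisors_add_singleton (Finset.zero_mem_image_tsub hrA) r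
end

section
/- The map β from finite subsets of ℕ to binary strings, sending A to the binary number whose i-th digit is 1 iff i ∈ A, satisfies β(A + B) = β(A) ⊗ β(B), where ⊗ is binary lunar multiplication (long multiplication with digitwise max as addition and digitwise min as digit multiplication). -/
open Pointwise

/-- The binary encoding of a finite set of naturals: the `i`-th digit is 1 iff `i ∈ A`. -/
def beta (A : Finset ℕ) : ℕ → ℕ := fun i => if i ∈ A then 1 else 0

/-- Lunar multiplication of digit sequences: long multiplication where digitwise
addition is `max` and digit multiplication is `min` (no carries). -/
def lunarMul (a b : ℕ → ℕ) : ℕ → ℕ :=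
  fun i => (Finset.range (i + 1)).sup fun j => min (a j) (b (i - j))

theorem Finset.sup_ite_one_zero {ι : Type*} (s : Finset ι) (p : ι → Prop) [DecidablePred p] :
    (s.sup fun j => if p j then 1 else 0 : ℕ) = if ∃ j ∈ s, p j then 1 else 0 := by
  split_ifs with h
  · obtain ⟨j, hj, hpj⟩ := h
    refine le_antisymm (Finset.sup_le fun k _ => by split_ifs <;> omega) ?_
    exact Finset.le_sup_of_le hj (by simp [hpj])
  · push Not at h
    exact Nat.eq_zero_of_le_zero (Finset.sup_le fun k hk => by simp [h k hk])

theorem min_beta_beta (A B : Finset ℕ) (j k : ℕ) :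
    min (beta A j) (beta B k) = if j ∈ A ∧ k ∈ B then 1 else 0 := by
  unfold beta
  split_ifs <;> simp_all

theorem Finset.mem_add_iff_exists_mem_range (A B : Finset ℕ) (i : ℕ) :
    i ∈ A + B ↔ ∃ j ∈ Finset.range (i + 1), j ∈ A ∧ i - j ∈ B := by
  rw [Finset.mem_add]
  constructor
  · rintro ⟨a, ha, b, hb, rfl⟩
    exact ⟨a, by simp, ha, by simpa using hb⟩
  · rintro ⟨j, hj, ha, hb⟩
    exact ⟨j, ha, i - j, hb, by simp at hj; omega⟩

theorem stmt6 (A B : Finset ℕ) :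
    beta (A + B) = lunarMul (beta A) (beta B) := by
  funext i
  simp only [lunarMul, min_beta_beta]
  rw [Finset.sup_ite_one_zero, beta]
  exact if_congr (Finset.mem_add_iff_exists_mem_range A B i) rfl rfl
end

section
/- For any n ∈ ℕ, the number of sumset divisors of the interval {0,1,...,n} equals the number of compositions of n+1 whose first part is greater than or equal to every other part. -/
open Pointwise

/-- A headstrong composition: a list of positive integers whose first part is
greater than or equal to every part. -/
def IsHeadstrong (n : ℕ) (l : List ℕ) : Prop :=
  l.sum = n ∧ (∀ x ∈ l, 0 < x) ∧ ∀ x ∈ l, x ≤ l.headI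

/-!
A sumset divisor `B` of `{0, …, n}` contains `0`, so it is the set of suffix sums of the list
`t` of gaps between its consecutive elements, read from the top. Its cofactor can be taken to be
`{0, …, m - 1}` with `m = n + 1 - max B`, and `B + {0, …, m - 1}` is the whole interval exactly
when no gap exceeds `m`. Hence `B ↦ m :: t` is a bijection onto the headstrong compositions
of `n + 1`.
-/

open Finset

def suffixSums (l : List ℕ) : Finset ℕ := (l.tails.map List.sum).toFinset

@[simp]
lemma suffixSums_nil : suffixSums [] = {0} := rfl

@[simp]
lemma suffixSums_cons (a : ℕ) (t : List ℕ) :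
    suffixSums (a :: t) = insert (a + t.sum) (suffixSums t) := by
  simp [suffixSums]

lemma sum_mem_suffixSums (l : List ℕ) : l.sum ∈ suffixSums l := by
  cases l <;> simp

lemma le_sum_of_mem_suffixSums {l : List ℕ} {b : ℕ} (hb : b ∈ suffixSums l) : b ≤ l.sum := by
  induction l with
  | nil => simp_all
  | cons a t ih =>
    rw [suffixSums_cons, mem_insert] at hb
    rcases hb with rfl | hb
    · simp
    · simpa using (ih hb).trans (Nat.le_add_left _ a)

lemma sum_eq_of_suffixSums_eq {l l' : List ℕ} (h : suffixSums l = suffixSums l') :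
    l.sum = l'.sum :=
  le_antisymm (le_sum_of_mem_suffixSums (h ▸ sum_mem_suffixSums l))
    (le_sum_of_mem_suffixSums (h ▸ sum_mem_suffixSums l'))

lemma suffixSums_injOn : Set.InjOn suffixSums {l | ∀ x ∈ l, 0 < x} := by
  intro l hl l' hl' h
  induction l generalizing l' with
  | nil =>
    cases l' with
    | nil => rfl
    | cons a' t' =>
      have hsum := sum_eq_of_suffixSums_eq h
      have := hl' a' List.mem_cons_self
      simp only [List.sum_nil, List.sum_cons] at hsum
      omega
  | cons a t ih =>
    have hsum := sum_eq_of_suffixSums_eq h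
    cases l' with
    | nil =>
      have := hl a List.mem_cons_self
      simp only [List.sum_nil, List.sum_cons] at hsum
      omega
    | cons a' t' =>
      have hnotMem : ∀ {x} {s : List ℕ}, 0 < x → x + s.sum ∉ suffixSums s := fun hx hmem =>
        (le_sum_of_mem_suffixSums hmem).not_gt (by omega)
      have htail : suffixSums t = suffixSums t' := by
        rw [suffixSums_cons, suffixSums_cons] at h
        have herase := congrArg (·.erase (a + t.sum)) h
        simp only [List.sum_cons] at hsum
        rwa [erase_insert (hnotMem (hl a List.mem_cons_self)), hsum,
          erase_insert (hnotMem (hl' a' List.mem_cons_self))] at herase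
      obtain rfl := ih (fun x hx => hl x (List.mem_cons_of_mem a hx))
        (fun x hx => hl' x (List.mem_cons_of_mem a' hx)) htail
      simp only [List.sum_cons, Nat.add_right_cancel_iff] at hsum
      rw [hsum]

lemma exists_suffixSums_eq {B : Finset ℕ} (h0 : 0 ∈ B) :
    ∃ t : List ℕ, (∀ x ∈ t, 0 < x) ∧ suffixSums t = B := by
  induction B using Finset.induction_on_max with
  | empty => simp at h0
  | insert a s hlt ih =>
    rcases s.eq_empty_or_nonempty with rfl | ⟨x, hx⟩
    · obtain rfl : 0 = a := by simpa using h0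
      exact ⟨[], by simp, rfl⟩
    · have hs0 : 0 ∈ s := by
        rcases mem_insert.1 h0 with rfl | h0
        · exact absurd (hlt x hx) (Nat.not_lt_zero x)
        · exact h0
      obtain ⟨t, htpos, rfl⟩ := ih hs0
      have ht : t.sum < a := hlt _ (sum_mem_suffixSums t)
      refine ⟨(a - t.sum) :: t, ?_, ?_⟩
      · simpa [Nat.sub_pos_of_lt ht] using htpos
      · rw [suffixSums_cons, Nat.sub_add_cancel ht.le]

lemma mem_add_range_iff {B : Finset ℕ} {m y : ℕ} :
    y ∈ B + range m ↔ ∃ b ∈ B, b ≤ y ∧ y < b + m := by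
  simp only [mem_add, mem_range]
  constructor
  · rintro ⟨b, hb, c, hc, rfl⟩
    exact ⟨b, hb, by omega, by omega⟩
  · rintro ⟨b, hb, hby, hy⟩
    exact ⟨b, hb, y - b, by omega, by omega⟩

lemma suffixSums_add_range_subset (t : List ℕ) (m : ℕ) :
    suffixSums t + range m ⊆ range (t.sum + m) := by
  intro y hy
  obtain ⟨b, hb, -, hy⟩ := mem_add_range_iff.1 hy
  have := le_sum_of_mem_suffixSums hb
  exact mem_range.2 (by omega)

/-- A part `x > m` of `t` would leave `[s + m, s + x)` uncovered, `s` the sum of what follows it. -/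
lemma covers_iff_forall_le {t : List ℕ} (ht : ∀ x ∈ t, 0 < x) (m : ℕ) :
    (∀ y < t.sum + m, ∃ b ∈ suffixSums t, b ≤ y ∧ y < b + m) ↔ ∀ x ∈ t, x ≤ m := by
  induction t with
  | nil => simp
  | cons a s ih =>
    have ha : 0 < a := ht a List.mem_cons_self
    have hs := ih (fun x hx => ht x (List.mem_cons_of_mem a hx))
    simp only [List.sum_cons, suffixSums_cons, mem_insert, List.mem_cons, forall_eq_or_imp,
      exists_eq_or_imp] at hs ⊢
    constructor
    · intro hcov
      have ham : a ≤ m := by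
        rcases hcov (s.sum + m) (by omega) with h | ⟨b, hb, _, _⟩
        · omega
        · have := le_sum_of_mem_suffixSums hb
          omega
      refine ⟨ham, hs.1 fun y hy => ?_⟩
      rcases hcov y (by omega) with h | h
      · exact ⟨s.sum, sum_mem_suffixSums s, by omega, by omega⟩
      · exact h
    · rintro ⟨ham, hparts⟩ y hy
      by_cases hys : y < s.sum + m
      · exact Or.inr (hs.2 hparts y hys)
      · exact Or.inl ⟨by omega, by omega⟩

lemma range_subset_suffixSums_add_range_iff {t : List ℕ} (ht : ∀ x ∈ t, 0 < x) (m : ℕ) :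
    range (t.sum + m) ⊆ suffixSums t + range m ↔ ∀ x ∈ t, x ≤ m := by
  simpa only [subset_iff, mem_range, mem_add_range_iff] using covers_iff_forall_le ht m

lemma range_eq_suffixSums_add_range_iff {t : List ℕ} (ht : ∀ x ∈ t, 0 < x) (m : ℕ) :
    range (t.sum + m) = suffixSums t + range m ↔ ∀ x ∈ t, x ≤ m := by
  rw [← range_subset_suffixSums_add_range_iff ht]
  exact ⟨fun h => h.subset, fun h => h.antisymm (suffixSums_add_range_subset t m)⟩

lemma exists_range_eq_add_iff (n : ℕ) (B : Finset ℕ) :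
    (∃ C, range (n + 1) = B + C) ↔ ∃ l, IsHeadstrong (n + 1) l ∧ suffixSums l.tail = B := by
  constructor
  · rintro ⟨C, hBC⟩
    have hmem : ∀ {b c}, b ∈ B → c ∈ C → b + c ≤ n := fun hb hc =>
      Nat.lt_succ_iff.1 (mem_range.1 (hBC ▸ add_mem_add hb hc))
    obtain ⟨b₀, hb₀, c₀, hc₀, hbc₀⟩ := mem_add.1 (hBC ▸ mem_range.2 n.succ_pos)
    obtain ⟨t, htpos, rfl⟩ := exists_suffixSums_eq (B := B) (by convert hb₀; omega)
    have htn := hmem (sum_mem_suffixSums t) hc₀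
    have hC : C ⊆ range (n + 1 - t.sum) := fun c hc =>
      mem_range.2 (by have := hmem (sum_mem_suffixSums t) hc; omega)
    have hcov : range (t.sum + (n + 1 - t.sum)) ⊆ suffixSums t + range (n + 1 - t.sum) := by
      rw [Nat.add_sub_cancel' (by omega), hBC]
      exact add_subset_add_left hC
    have hparts := (range_subset_suffixSums_add_range_iff htpos _).1 hcov
    refine ⟨(n + 1 - t.sum) :: t, ⟨?_, ?_, ?_⟩, rfl⟩
    · simp only [List.sum_cons]
      omega
    · simpa [show 0 < n + 1 - t.sum by omega] using htpos
    · simpa using hparts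
  · rintro ⟨l, ⟨hsum, hpos, hhead⟩, rfl⟩
    obtain ⟨a, t, rfl⟩ := List.exists_cons_of_ne_nil (l := l) (by rintro rfl; simp at hsum)
    refine ⟨range a, ?_⟩
    simp only [List.sum_cons] at hsum
    rw [List.tail_cons, ← hsum, add_comm,
      range_eq_suffixSums_add_range_iff (fun x hx => hpos x (List.mem_cons_of_mem a hx))]
    exact fun x hx => hhead x (List.mem_cons_of_mem a hx)

lemma tail_injOn_isHeadstrong (N : ℕ) : Set.InjOn List.tail {l | IsHeadstrong N l} := by
  rintro (_ | ⟨a, t⟩) ⟨hsum, hpos, -⟩ (_ | ⟨a', t'⟩) ⟨hsum', hpos', -⟩ h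
  · rfl
  · have := hpos' a' List.mem_cons_self
    simp_all
  · have := hpos a List.mem_cons_self
    simp_all
  · simp only [List.tail_cons] at h
    subst h
    simp only [List.sum_cons] at hsum hsum'
    rw [show a = a' by omega]

theorem stmt7 (n : ℕ) :
    {B : Finset ℕ | ∃ C : Finset ℕ, Finset.range (n + 1) = B + C}.ncard =
      {l : List ℕ | IsHeadstrong (n + 1) l}.ncard := by
  have himage : {B : Finset ℕ | ∃ C : Finset ℕ, Finset.range (n + 1) = B + C} =
      (suffixSums ∘ List.tail) '' {l | IsHeadstrong (n + 1) l} := by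
    ext B
    simp [exists_range_eq_add_iff]
  rw [himage]
  apply Set.InjOn.ncard_image
  exact suffixSums_injOn.comp (tail_injOn_isHeadstrong _) fun l hl x hx =>
    hl.2.1 x (List.mem_of_mem_tail hx)
end

section
/- For any n ∈ ℕ and m ≥ 1, the number of sumset divisors of {0,1,...,n} of cardinality exactly m equals the number of headstrong compositions of n+1 with exactly m parts. -/
open Pointwise

/-!
A composition `(a₁, …, a_m)` of `n + 1` is determined by the set `B` of its proper tail sums
`a₂ + ⋯ + a_m > a₃ + ⋯ + a_m > ⋯ > 0`. The intervals `[b, b + a₁)`, `b ∈ B`, cover `[0, n]`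
exactly when every part is at most `a₁`, and then `[0, n] = B + [0, a₁)`. Conversely, if
`[0, n] = B + C` then `C ⊆ [0, n - max B]`, so every `x ≤ n` lies less than `n + 1 - max B` above
some element of `B`: the gaps of `B ∪ {n + 1}` are at most the top gap `n + 1 - max B`, i.e. they
form a headstrong composition of `n + 1`.
-/

namespace List

def tailSums : List ℕ → Finset ℕ
  | [] => ∅
  | _ :: t => insert t.sum t.tailSums

@[simp]
theorem tailSums_nil : tailSums [] = ∅ := rfl

@[simp]
theorem tailSums_cons (a : ℕ) (t : List ℕ) : (a :: t).tailSums = insert t.sum t.tailSums := rfl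

theorem le_sum_of_mem_tailSums {l : List ℕ} {b : ℕ} (hb : b ∈ l.tailSums) : b ≤ l.sum := by
  induction l with
  | nil => simp at hb
  | cons a t ih =>
    rw [tailSums_cons, Finset.mem_insert] at hb
    rcases hb with rfl | hb
    · simp
    · simpa using (ih hb).trans (Nat.le_add_left _ a)

theorem le_sum_tail_of_mem_tailSums_cons {a : ℕ} {t : List ℕ} {b : ℕ}
    (hb : b ∈ (a :: t).tailSums) : b ≤ t.sum := by
  rw [tailSums_cons, Finset.mem_insert] at hb
  exact hb.elim le_of_eq le_sum_of_mem_tailSums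

theorem lt_sum_of_mem_tailSums {l : List ℕ} (hl : ∀ p ∈ l, 0 < p) {b : ℕ}
    (hb : b ∈ l.tailSums) : b < l.sum := by
  cases l with
  | nil => simp at hb
  | cons a t =>
    have := le_sum_tail_of_mem_tailSums_cons hb
    have := hl a mem_cons_self
    simp only [sum_cons]
    omega

theorem card_tailSums {l : List ℕ} (hl : ∀ p ∈ l, 0 < p) : l.tailSums.card = l.length := by
  induction l with
  | nil => rfl
  | cons a t ih =>
    have ht : ∀ p ∈ t, 0 < p := fun p hp => hl p (mem_cons_of_mem a hp)
    rw [tailSums_cons, Finset.card_insert_of_notMem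
      (fun h => (lt_sum_of_mem_tailSums ht h).false), ih ht, length_cons]

theorem eq_of_tailSums_eq {l₁ l₂ : List ℕ} (h₁ : ∀ p ∈ l₁, 0 < p) (h₂ : ∀ p ∈ l₂, 0 < p)
    (hsum : l₁.sum = l₂.sum) (htail : l₁.tailSums = l₂.tailSums) : l₁ = l₂ := by
  induction l₁ generalizing l₂ with
  | nil => cases l₂ with
    | nil => rfl
    | cons a' t' => exact absurd htail.symm (Finset.insert_ne_empty _ _)
  | cons a t ih =>
    cases l₂ with
    | nil => exact absurd htail (Finset.insert_ne_empty _ _)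
    | cons a' t' =>
      have ht : ∀ p ∈ t, 0 < p := fun p hp => h₁ p (mem_cons_of_mem a hp)
      have ht' : ∀ p ∈ t', 0 < p := fun p hp => h₂ p (mem_cons_of_mem a' hp)
      -- the largest tail sum is the sum of the tail
      have hmem : t.sum ∈ (a' :: t').tailSums := htail ▸ Finset.mem_insert_self _ _
      have hmem' : t'.sum ∈ (a :: t).tailSums := htail ▸ Finset.mem_insert_self _ _
      have hmax : t.sum = t'.sum := le_antisymm
        (le_sum_tail_of_mem_tailSums_cons hmem) (le_sum_tail_of_mem_tailSums_cons hmem')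
      have hrest : t.tailSums = t'.tailSums := by
        have := congrArg (Finset.erase · t.sum) htail
        simp only [tailSums_cons] at this
        rwa [Finset.erase_insert fun h => (lt_sum_of_mem_tailSums ht h).false, hmax,
          Finset.erase_insert fun h => (lt_sum_of_mem_tailSums ht' h).false] at this
      simp only [sum_cons] at hsum
      rw [ih ht ht' hmax hrest, show a = a' by omega]

theorem exists_mem_tailSums_le_lt_add {l : List ℕ} {h : ℕ} (hl : ∀ p ∈ l, p ≤ h) {x : ℕ}
    (hx : x < l.sum) : ∃ b ∈ l.tailSums, b ≤ x ∧ x < b + h := by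
  induction l with
  | nil => simp at hx
  | cons a t ih =>
    simp only [sum_cons] at hx
    by_cases hxt : t.sum ≤ x
    · exact ⟨t.sum, Finset.mem_insert_self _ _, hxt, by have := hl a mem_cons_self; omega⟩
    · obtain ⟨b, hb, hbx⟩ := ih (fun p hp => hl p (mem_cons_of_mem a hp)) (by omega)
      exact ⟨b, Finset.mem_insert_of_mem hb, hbx⟩

theorem range_sum_eq_tailSums_add_range {l : List ℕ} (hl : ∀ p ∈ l, p ≤ l.headI) :
    Finset.range l.sum = l.tailSums + Finset.range l.headI := by
  ext x
  simp only [Finset.mem_range, Finset.mem_add]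
  constructor
  · intro hx
    obtain ⟨b, hb, hbx, hxb⟩ := exists_mem_tailSums_le_lt_add hl hx
    exact ⟨b, hb, x - b, by omega, by omega⟩
  · rintro ⟨b, hb, c, hc, rfl⟩
    cases l with
    | nil => simp at hb
    | cons a t =>
      have := le_sum_tail_of_mem_tailSums_cons hb
      simp only [headI_cons] at hc
      simp only [sum_cons]
      omega

theorem exists_tailSums_eq (B : Finset ℕ) :
    ∀ {N h : ℕ}, (∀ b ∈ B, b < N) → (∀ x < N, ∃ b ∈ B, b ≤ x ∧ x < b + h) →
      ∃ l : List ℕ, (∀ p ∈ l, 0 < p) ∧ (∀ p ∈ l, p ≤ h) ∧ l.sum = N ∧ l.tailSums = B := by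
  induction B using Finset.induction_on_max with
  | empty =>
    intro N h _ hcover
    refine ⟨[], by simp, by simp, ?_, rfl⟩
    by_contra hN
    simpa using hcover 0 (by simp at hN ⊢; omega)
  | insert a s has ih =>
    intro N h hlt hcover
    have haN := hlt a (Finset.mem_insert_self a s)
    obtain ⟨l, hpos, hle, hsum, htail⟩ := ih (N := a) (h := h) has fun x hx => by
      obtain ⟨b, hb, hbx⟩ := hcover x (by omega)
      rcases Finset.mem_insert.1 hb with rfl | hb
      · omega
      · exact ⟨b, hb, hbx⟩
    have hgap : N - a ≤ h := by
      obtain ⟨b, hb, hbx⟩ := hcover (N - 1) (by omega)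
      have : b ≤ a := (Finset.mem_insert.1 hb).elim le_of_eq fun hb => (has b hb).le
      omega
    refine ⟨(N - a) :: l, ?_, ?_, by simp [hsum]; omega, by simp [hsum, htail]⟩
    · exact forall_mem_cons.2 ⟨Nat.sub_pos_of_lt haN, hpos⟩
    · exact forall_mem_cons.2 ⟨hgap, hle⟩

end List

open List

theorem isHeadstrong_tailSums_add_range {N : ℕ} {l : List ℕ} (hl : IsHeadstrong N l) :
    Finset.range N = l.tailSums + Finset.range l.headI :=
  hl.1 ▸ range_sum_eq_tailSums_add_range hl.2.2

theorem exists_isHeadstrong_tailSums_eq {n : ℕ} {B C : Finset ℕ}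
    (hBC : Finset.range (n + 1) = B + C) : ∃ l, IsHeadstrong (n + 1) l ∧ l.tailSums = B := by
  have hmem : ∀ x, x ≤ n ↔ ∃ b ∈ B, ∃ c ∈ C, b + c = x := fun x => by
    rw [← Finset.mem_add, ← hBC, Finset.mem_range, Nat.lt_succ_iff]
  obtain ⟨b₀, hb₀, c₀, hc₀, -⟩ := (hmem 0).1 n.zero_le
  set M := B.max' ⟨b₀, hb₀⟩
  have hM : M + c₀ ≤ n := (hmem _).2 ⟨M, B.max'_mem _, c₀, hc₀, rfl⟩
  obtain ⟨l, hpos, hle, hsum, htail⟩ := exists_tailSums_eq B (N := n + 1) (h := n + 1 - M)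
    (fun b hb => by have := B.le_max' b hb; omega) fun x hx => by
      obtain ⟨b, hb, c, hc, rfl⟩ := (hmem x).1 (by omega)
      have := (hmem _).2 ⟨M, B.max'_mem _, c, hc, rfl⟩
      exact ⟨b, hb, by omega, by omega⟩
  refine ⟨l, ⟨hsum, hpos, fun p hp => (hle p hp).trans ?_⟩, htail⟩
  cases l with
  | nil => simp at hp
  | cons a t =>
    -- the first part is `n + 1 - t.sum` and `t.sum ∈ B`
    have := B.le_max' t.sum (htail ▸ Finset.mem_insert_self _ _)
    simp only [sum_cons] at hsum
    simp only [headI_cons]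
    omega

theorem stmt8_general (n m : ℕ) :
    {B : Finset ℕ | B.card = m ∧ ∃ C : Finset ℕ, Finset.range (n + 1) = B + C}.ncard =
      {l : List ℕ | IsHeadstrong (n + 1) l ∧ l.length = m}.ncard := by
  have hdivisors : {B : Finset ℕ | B.card = m ∧ ∃ C : Finset ℕ, Finset.range (n + 1) = B + C} =
      tailSums '' {l : List ℕ | IsHeadstrong (n + 1) l ∧ l.length = m} := by
    ext B
    constructor
    · rintro ⟨rfl, C, hBC⟩
      obtain ⟨l, hl, rfl⟩ := exists_isHeadstrong_tailSums_eq hBC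
      exact ⟨l, ⟨hl, (card_tailSums hl.2.1).symm⟩, rfl⟩
    · rintro ⟨l, ⟨hl, rfl⟩, rfl⟩
      exact ⟨card_tailSums hl.2.1, _, isHeadstrong_tailSums_add_range hl⟩
  rw [hdivisors, Set.InjOn.ncard_image]
  exact fun l₁ h₁ l₂ h₂ h => eq_of_tailSums_eq h₁.1.2.1 h₂.1.2.1 (h₁.1.1.trans h₂.1.1.symm) h

theorem stmt8 (n m : ℕ) (hm : 1 ≤ m) :
    {B : Finset ℕ | B.card = m ∧ ∃ C : Finset ℕ, Finset.range (n + 1) = B + C}.ncard =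
      {l : List ℕ | IsHeadstrong (n + 1) l ∧ l.length = m}.ncard :=
  stmt8_general n m
end

section
/- With F(n,k) the generalized Fibonacci numbers (F(n,k)=0 for 1≤k<n, F(n,n)=1, F(n,k)=Σ_{j=1}^n F(n,k-j) for k>n): for any n > 1 and k > n, 3·F(n,k) ≤ 2·F(n,k+1), with equality if and only if n = 2 and k = 4. -/
/-!
Subtracting the recurrence at `k` from the one at `k + 1` gives
`F(k+1) + F(k-n) = 2 F(k)`, so the claim becomes `2 F(k-n) ≤ F(k)`, with equality
only for `n = 2, k = 4`. If `k < 2n` then `F(k-n) = 0 < F(k)`. Otherwise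
`F(k) ≥ F(k-1) + F(k-n)`, and `F(k-1) > F(k-n)` because `F` is monotone from index `1`
on and strictly increasing from `n + 1` on; the only case where no strict step fits
between `k - n` and `k - 1` is `n = 2, k = 4`, where `F(3) = F(2)`.
-/

open Finset

theorem Finset.sum_Icc_one_eq_sum_range {M : Type*} [AddCommMonoid M] (g : ℕ → M) (n : ℕ) :
    ∑ j ∈ Icc 1 n, g j = ∑ i ∈ range n, g (i + 1) := by
  rw [range_eq_Ico, sum_Ico_add', zero_add, Ico_add_one_right_eq_Icc]

namespace GeneralizedFibonacci

variable {f : ℕ → ℕ} {n : ℕ}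

theorem sum_le_of_subset_Icc (hrec : ∀ k, n < k → f k = ∑ j ∈ Icc 1 n, f (k - j))
    {s : Finset ℕ} (hs : s ⊆ Icc 1 n) {m : ℕ} (hm : n < m) : ∑ j ∈ s, f (m - j) ≤ f m :=
  hrec m hm ▸ sum_le_sum_of_subset hs

theorem add_le (hrec : ∀ k, n < k → f k = ∑ j ∈ Icc 1 n, f (k - j))
    {m i j : ℕ} (hm : n < m) (hi : 1 ≤ i) (hij : i < j) (hj : j ≤ n) :
    f (m - i) + f (m - j) ≤ f m := by
  rw [← sum_pair (f := fun x => f (m - x)) hij.ne]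
  refine sum_le_of_subset_Icc hrec (fun x hx => ?_) hm
  simp only [mem_insert, mem_singleton] at hx
  exact mem_Icc.2 (by omega)

theorem monotoneOn (hzero : ∀ k, 1 ≤ k → k < n → f k = 0)
    (hrec : ∀ k, n < k → f k = ∑ j ∈ Icc 1 n, f (k - j)) (hn : 1 ≤ n) :
    MonotoneOn f (Set.Ici 1) := by
  refine monotoneOn_of_le_succ Set.ordConnected_Ici fun m _ hm _ => ?_
  rcases lt_or_ge m n with hmn | hmn
  · simp [hzero m hm hmn]
  · simpa using sum_le_of_subset_Icc hrec (s := {1}) (by simpa using hn) (Nat.lt_succ_of_le hmn)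

theorem one_le (hzero : ∀ k, 1 ≤ k → k < n → f k = 0) (hone : f n = 1)
    (hrec : ∀ k, n < k → f k = ∑ j ∈ Icc 1 n, f (k - j)) (hn : 1 ≤ n) {k : ℕ} (hk : n ≤ k) :
    1 ≤ f k :=
  hone ▸ monotoneOn hzero hrec hn hn (hn.trans hk) hk

theorem lt_succ (hzero : ∀ k, 1 ≤ k → k < n → f k = 0) (hone : f n = 1)
    (hrec : ∀ k, n < k → f k = ∑ j ∈ Icc 1 n, f (k - j)) (hn : 2 ≤ n) {m : ℕ} (hm : n < m) :
    f m < f (m + 1) := by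
  have h := add_le hrec (m := m + 1) (by omega) le_rfl one_lt_two hn
  have := one_le hzero hone hrec (by omega) (k := m + 1 - 2) (by omega)
  simp only [Nat.add_sub_cancel] at h
  omega

theorem add_sub_eq_two_mul (hrec : ∀ k, n < k → f k = ∑ j ∈ Icc 1 n, f (k - j))
    (hn : 1 ≤ n) {k : ℕ} (hk : n < k) : f (k + 1) + f (k - n) = 2 * f k := by
  obtain ⟨m, rfl⟩ : ∃ m, n = m + 1 := ⟨n - 1, by omega⟩
  have hsucc := hrec (k + 1) (by omega)
  have hk' := hrec k hk
  rw [sum_Icc_one_eq_sum_range, sum_range_succ'] at hsucc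
  rw [sum_Icc_one_eq_sum_range, sum_range_succ] at hk'
  have hshift : ∀ i, k + 1 - (i + 1 + 1) = k - (i + 1) := fun i => by omega
  simp only [hshift, Nat.add_sub_cancel, zero_add] at hsucc
  omega

theorem two_mul_sub_lt (hzero : ∀ k, 1 ≤ k → k < n → f k = 0) (hone : f n = 1)
    (hrec : ∀ k, n < k → f k = ∑ j ∈ Icc 1 n, f (k - j)) (hn : 2 ≤ n) {k : ℕ} (hk : n < k)
    (h24 : ¬(n = 2 ∧ k = 4)) : 2 * f (k - n) < f k := by
  rcases lt_or_ge (k - n) n with hkn | hkn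
  · rw [hzero _ (by omega) hkn]
    exact one_le hzero hone hrec (by omega) hk.le
  · have hmono := monotoneOn hzero hrec (by omega)
    set a := max (k - n) (n + 1)
    have h₁ : f (k - n) ≤ f a :=
      hmono (Set.mem_Ici.2 (by omega)) (Set.mem_Ici.2 (by omega)) (le_max_left _ _)
    have h₂ : f a < f (a + 1) := lt_succ hzero hone hrec hn (by omega)
    have h₃ : f (a + 1) ≤ f (k - 1) :=
      hmono (Set.mem_Ici.2 (by omega)) (Set.mem_Ici.2 (by omega)) (by omega)
    have := add_le hrec hk le_rfl (by omega) le_rfl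
    omega

theorem four_eq_two_mul_two (hf1 : f 1 = 0)
    (hrec : ∀ k, 2 < k → f k = ∑ j ∈ Icc 1 2, f (k - j)) :
    f 4 = 2 * f 2 := by
  have h3 : f 3 = f 2 + f 1 := by
    simp [hrec 3 (by norm_num), sum_Icc_one_eq_sum_range, sum_range_succ]
  have := add_sub_eq_two_mul hrec one_le_two (k := 3) (by norm_num)
  simp only [Nat.reduceSub, Nat.reduceAdd, hf1] at this
  omega

end GeneralizedFibonacci

open GeneralizedFibonacci in
theorem stmt10 (F : ℕ → ℕ → ℕ)
    (h0 : ∀ n k, 1 ≤ k → k < n → F n k = 0)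
    (h1 : ∀ n, F n n = 1)
    (hrec : ∀ n k, n < k → F n k = ∑ j ∈ Finset.Icc 1 n, F n (k - j)) :
    ∀ n k, 1 < n → n < k →
      3 * F n k ≤ 2 * F n (k + 1) ∧
        (3 * F n k = 2 * F n (k + 1) ↔ n = 2 ∧ k = 4) := by
  intro n k hn hk
  have hid := add_sub_eq_two_mul (hrec n) hn.le hk
  by_cases h24 : n = 2 ∧ k = 4
  · obtain ⟨rfl, rfl⟩ := h24
    have := four_eq_two_mul_two (h0 2 1 le_rfl one_lt_two) (hrec 2)
    simp only [Nat.reduceSub, Nat.reduceAdd, and_self, iff_true] at hid ⊢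
    omega
  · have := two_mul_sub_lt (h0 n) (h1 n) (hrec n) hn hk h24
    simp only [h24, iff_false]
    omega
end

section
/- The number of headstrong compositions of k equals Σ_{n=1}^{k} F(n, k), where F(n,·) is the n-th order generalized Fibonacci sequence (F(n,k)=0 for 1≤k<n, F(n,n)=1, F(n,k)=Σ_{j=1}^n F(n,k-j) for k>n). -/
open Finset

lemma card_biUnion_image_cons {ι α : Type*} [DecidableEq α] (s : Finset ι) (head : ι → α)
    (hhead : Set.InjOn head s) (tails : ι → Finset (List α)) :
    (s.biUnion fun i => (tails i).image (head i :: ·)).card = ∑ i ∈ s, (tails i).card := by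
  rw [card_biUnion]
  · exact sum_congr rfl fun i _ => card_image_of_injective _ List.cons_injective
  · intro i hi j hj hij
    refine disjoint_left.mpr fun l hli hlj => hij (hhead hi hj ?_)
    obtain ⟨t, -, rfl⟩ := mem_image.mp hli
    obtain ⟨u, -, hu⟩ := mem_image.mp hlj
    exact (List.cons.inj hu).1.symm

def boundedCompositions (n : ℕ) : ℕ → Finset (List ℕ)
  | 0 => {[]}
  | m + 1 => (Icc 1 (min n (m + 1))).attach.biUnion
      fun j => (boundedCompositions n (m + 1 - j)).image (j.1 :: ·)
decreasing_by
  have := (mem_Icc.mp j.2).1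
  omega

lemma boundedCompositions_succ (n m : ℕ) :
    boundedCompositions n (m + 1) = (Icc 1 (min n (m + 1))).attach.biUnion
      fun j => (boundedCompositions n (m + 1 - j)).image (j.1 :: ·) := by
  rw [boundedCompositions]

lemma mem_boundedCompositions {n m : ℕ} {l : List ℕ} :
    l ∈ boundedCompositions n m ↔ l.sum = m ∧ ∀ x ∈ l, 1 ≤ x ∧ x ≤ n := by
  induction m using Nat.strong_induction_on generalizing l with
  | _ m ih =>
    match m, l with
    | 0, [] => simp [boundedCompositions]
    | 0, a :: t =>
      simp only [boundedCompositions, mem_singleton, reduceCtorEq, false_iff, List.sum_cons]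
      rintro ⟨hsum, hparts⟩
      have := (hparts a List.mem_cons_self).1
      omega
    | m + 1, [] => simp [boundedCompositions_succ]
    | m + 1, a :: t =>
      simp only [boundedCompositions_succ, mem_biUnion, mem_attach, mem_image, true_and,
        Subtype.exists, List.cons.injEq, mem_Icc, List.sum_cons, List.mem_cons, forall_eq_or_imp]
      constructor
      · rintro ⟨j, hj, t, ht, rfl, rfl⟩
        obtain ⟨hsum, hparts⟩ := (ih _ (by omega)).mp ht
        exact ⟨by omega, by omega, hparts⟩
      · rintro ⟨hsum, ha, hparts⟩
        exact ⟨a, by omega, t, (ih _ (by omega)).mpr ⟨by omega, hparts⟩, rfl, rfl⟩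

lemma card_boundedCompositions {n : ℕ} (f : ℕ → ℕ) (h0 : ∀ k, 1 ≤ k → k < n → f k = 0)
    (h1 : f n = 1) (hrec : ∀ k, n < k → f k = ∑ j ∈ Icc 1 n, f (k - j)) (m : ℕ) :
    (boundedCompositions n m).card = f (n + m) := by
  induction m using Nat.strong_induction_on with
  | _ m ih =>
    match m with
    | 0 => simp [boundedCompositions, h1]
    | m + 1 =>
      rw [boundedCompositions_succ, card_biUnion_image_cons _ _ Subtype.val_injective.injOn,
        sum_attach (Icc 1 (min n (m + 1))) fun j => (boundedCompositions n (m + 1 - j)).card,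
        hrec _ (by omega)]
      calc ∑ j ∈ Icc 1 (min n (m + 1)), (boundedCompositions n (m + 1 - j)).card
          = ∑ j ∈ Icc 1 (min n (m + 1)), f (n + (m + 1) - j) :=
            sum_congr rfl fun j hj => by
              rw [mem_Icc] at hj
              rw [ih _ (by omega)]
              congr 1
              omega
        _ = ∑ j ∈ Icc 1 n, f (n + (m + 1) - j) := by
          -- the terms with `m + 1 < j ≤ n` are values of `f` below `n`
          refine sum_subset (Icc_subset_Icc_right (min_le_left _ _)) fun j hj hj' => ?_
          rw [mem_Icc] at hj hj'
          exact h0 _ (by omega) (by omega)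

lemma isHeadstrong_cons_iff {k n : ℕ} {t : List ℕ} :
    IsHeadstrong k (n :: t) ↔ n ∈ Icc 1 k ∧ t ∈ boundedCompositions n (k - n) := by
  simp only [IsHeadstrong, mem_boundedCompositions, List.sum_cons, List.mem_cons,
    forall_eq_or_imp, List.headI_cons, mem_Icc]
  constructor
  · rintro ⟨hsum, ⟨hn, hpos⟩, -, hle⟩
    exact ⟨⟨hn, by omega⟩, by omega, fun x hx => ⟨hpos x hx, hle x hx⟩⟩
  · rintro ⟨⟨hn, hnk⟩, hsum, hparts⟩
    exact ⟨by omega, ⟨hn, fun x hx => (hparts x hx).1⟩, le_rfl, fun x hx => (hparts x hx).2⟩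

lemma setOf_isHeadstrong {k : ℕ} (hk : 1 ≤ k) :
    {l | IsHeadstrong k l} =
      ↑((Icc 1 k).biUnion fun n => (boundedCompositions n (k - n)).image (n :: ·)) := by
  ext (_ | ⟨n, t⟩)
  · simpa [IsHeadstrong] using (Nat.one_le_iff_ne_zero.mp hk).symm
  · simp [isHeadstrong_cons_iff, and_comm]

theorem stmt11 (F : ℕ → ℕ → ℕ)
    (h0 : ∀ n k, 1 ≤ k → k < n → F n k = 0)
    (h1 : ∀ n, F n n = 1)
    (hrec : ∀ n k, n < k → F n k = ∑ j ∈ Finset.Icc 1 n, F n (k - j)) :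
    ∀ k, 1 ≤ k →
      {l : List ℕ | IsHeadstrong k l}.ncard = ∑ n ∈ Finset.Icc 1 k, F n k := by
  intro k hk
  rw [setOf_isHeadstrong hk, Set.ncard_coe_finset,
    card_biUnion_image_cons _ (fun n => n) (fun _ _ _ _ h => h)]
  refine sum_congr rfl fun n hn => ?_
  rw [card_boundedCompositions (F n) (h0 n) (h1 n) (hrec n), Nat.add_sub_cancel' (mem_Icc.mp hn).2]
end

section
/- Let d(A) be the number of sumset divisors of A. For all k ≥ 1, 2·d({0,...,k-1}) ≥ d({0,...,k}), with strict inequality for k > 1. -/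
/-!
Write `b` for the largest element of `B`. For `N ≥ 1`, `B` is a sumset divisor of `{0, …, N-1}`
exactly when `0 ∈ B` and every `y < N` is `x + c` with `x ∈ B` and `c < N - b`; the cofactor can
then be taken to be `{0, …, N-b-1}`.

Let `B` divide `{0, …, N}` but not `{0, …, N-1}`. Removing `b` leaves a divisor of `{0, …, N-1}`,
and `B` is determined by this remainder: `B` misses `N - b` consecutive numbers below `b`, and a
second such divisor with the same remainder and a larger top `b'` would miss them too, although
it never misses more than `N - b'` consecutive numbers. So the new divisors inject into the old
ones, and `d({0, …, N}) ≤ 2 d({0, …, N-1})`. For `N ≥ 2` the image misses `{0, …, m-1}`, where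
`m ∈ {1, 2}` and `N + m` is odd: for a preimage `{0, …, m-1} ∪ {b}`, dividing `{0, …, N}` forces
`2b ≤ N + m` and not dividing `{0, …, N-1}` forces `2b ≥ N + m`.
-/

open Pointwise

open Set

/-- Every `y < N` is `x + c` with `x ∈ B` and `c < N - B.sup id`. -/
def RangeDivisor (N : ℕ) (B : Finset ℕ) : Prop :=
  0 ∈ B ∧ ∀ y < N, ∃ x ∈ B, x ≤ y ∧ y + B.sup id < x + N

def eraseMax (B : Finset ℕ) : Finset ℕ :=
  B.erase (B.sup id)

lemma Finset.sup_id_mem {α : Type*} [LinearOrder α] [OrderBot α] {s : Finset α}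
    (h : s.Nonempty) : s.sup id ∈ s := by
  simpa using Finset.sup_mem_of_nonempty (f := id) h

lemma insert_sup_eraseMax {B : Finset ℕ} (h : B.Nonempty) : insert (B.sup id) (eraseMax B) = B :=
  Finset.insert_erase (Finset.sup_id_mem h)

namespace RangeDivisor

variable {N m : ℕ} {B : Finset ℕ}

lemma sup_lt (hN : 0 < N) (h : RangeDivisor N B) : B.sup id < N := by
  obtain ⟨x, -, hx, hlt⟩ := h.2 0 hN
  omega

lemma subset_range (hN : 0 < N) (h : RangeDivisor N B) : B ⊆ Finset.range N := fun _ hx =>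
  Finset.mem_range.2 ((Finset.le_sup (f := id) hx).trans_lt (h.sup_lt hN))

lemma exists_range_eq_add_iff (hN : 0 < N) :
    (∃ C : Finset ℕ, Finset.range N = B + C) ↔ RangeDivisor N B := by
  constructor
  · rintro ⟨C, hC⟩
    obtain ⟨x₀, h0, c₀, hc₀, hxc₀⟩ := Finset.mem_add.1 (hC ▸ Finset.mem_range.2 hN)
    obtain ⟨rfl, rfl⟩ : x₀ = 0 ∧ c₀ = 0 := by omega
    refine ⟨h0, fun y hy => ?_⟩
    obtain ⟨x, hx, c, hc, rfl⟩ := Finset.mem_add.1 (hC ▸ Finset.mem_range.2 hy)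
    have hsup : B.sup id + c < N :=
      Finset.mem_range.1 (hC ▸ Finset.add_mem_add (Finset.sup_id_mem ⟨0, h0⟩) hc)
    exact ⟨x, hx, by omega, by omega⟩
  · rintro ⟨-, hcover⟩
    refine ⟨Finset.range (N - B.sup id), Finset.ext fun y => ⟨fun hy => ?_, fun hy => ?_⟩⟩
    · obtain ⟨x, hx, hxy, hlt⟩ := hcover y (Finset.mem_range.1 hy)
      exact Finset.mem_add.2 ⟨x, hx, y - x, Finset.mem_range.2 (by omega), by omega⟩
    · obtain ⟨x, hx, c, hc, rfl⟩ := Finset.mem_add.1 hy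
      have hxb : x ≤ B.sup id := Finset.le_sup (f := id) hx
      have hc := Finset.mem_range.1 hc
      exact Finset.mem_range.2 (by omega)

lemma setOf_finite (hN : 0 < N) : {B | RangeDivisor N B}.Finite :=
  (Finset.range N).powerset.finite_toSet.subset fun _ hB =>
    Finset.mem_powerset.2 (RangeDivisor.subset_range hN hB)

lemma range (hm : 0 < m) (hmN : m ≤ N) : RangeDivisor N (Finset.range m) := by
  have hsup : (Finset.range m).sup id ≤ m - 1 :=
    Finset.sup_le fun x hx => by simp only [Finset.mem_range] at hx; simp only [id]; omega
  refine ⟨Finset.mem_range.2 hm, fun y hy => ⟨min y (m - 1), Finset.mem_range.2 (by omega),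
    min_le_left _ _, by omega⟩⟩

lemma exists_hole_of_not (h0 : 0 ∈ B) (hB : ¬RangeDivisor N B) :
    ∃ y < B.sup id, ∀ x ∈ B, x ≤ y → x + N ≤ y + B.sup id := by
  simp only [RangeDivisor, h0, true_and, not_forall, not_exists, not_and, not_lt] at hB
  obtain ⟨y, hyN, hhole⟩ := hB
  refine ⟨y, ?_, hhole⟩
  by_contra! hy
  have := hhole _ (Finset.sup_id_mem ⟨0, h0⟩) hy
  omega

lemma eraseMax_of_not (h : RangeDivisor (N + 1) B) (hB : ¬RangeDivisor N B) :
    RangeDivisor N (eraseMax B) := by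
  obtain ⟨z, hz, -⟩ := exists_hole_of_not h.1 hB
  have h0 : 0 ∈ eraseMax B := Finset.mem_erase.2 ⟨by omega, h.1⟩
  set s := (eraseMax B).sup id
  have hs : s ∈ eraseMax B := Finset.sup_id_mem ⟨0, h0⟩
  have hsb : s < B.sup id := lt_of_le_of_ne (Finset.le_sup (f := id) (Finset.mem_of_mem_erase hs))
    (Finset.ne_of_mem_erase hs)
  refine ⟨h0, fun y hy => ?_⟩
  rcases le_or_gt s y with hsy | hys
  · exact ⟨s, hs, hsy, by omega⟩
  · obtain ⟨x, hx, hxy, hlt⟩ := h.2 y (by omega)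
    exact ⟨x, Finset.mem_erase.2 ⟨by omega, hx⟩, hxy, by omega⟩

lemma sup_le_of_eraseMax_eq {B₁ B₂ : Finset ℕ} (h₁ : 0 ∈ B₁) (hB₁ : ¬RangeDivisor N B₁)
    (h₂ : RangeDivisor (N + 1) B₂) (he : eraseMax B₁ = eraseMax B₂) :
    B₂.sup id ≤ B₁.sup id := by
  obtain ⟨y, hy, hhole⟩ := exists_hole_of_not h₁ hB₁
  by_contra! hlt
  have hb₂ := h₂.sup_lt N.succ_pos
  obtain ⟨x, hx, hxy, hgap⟩ := h₂.2 y (by omega)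
  have hx₁ : x ∈ eraseMax B₁ := he ▸ Finset.mem_erase.2 ⟨by omega, hx⟩
  have := hhole x (Finset.mem_of_mem_erase hx₁) hxy
  omega

lemma eraseMax_ne_range (hm : 0 < m) (hpar : (N + m) % 2 = 1)
    (h : RangeDivisor (N + 1) B) (hB : ¬RangeDivisor N B) : eraseMax B ≠ Finset.range m := by
  intro he
  set b := B.sup id
  obtain ⟨y, hy, hhole⟩ := exists_hole_of_not h.1 hB
  have hbN := h.sup_lt N.succ_pos
  have lt_of_ne : ∀ x ∈ B, x ≠ b → x < m := fun x hx hxb =>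
    Finset.mem_range.1 (he ▸ Finset.mem_erase.2 ⟨hxb, hx⟩)
  have range_sub : Finset.range m ⊆ B := he ▸ Finset.erase_subset _ _
  have hmb : m ≤ b := by
    by_contra! hbm
    have hb : b ∈ eraseMax B := he ▸ Finset.mem_range.2 hbm
    exact Finset.notMem_erase b B hb
  obtain ⟨x, hx, hxb, hgap⟩ := h.2 (b - 1) (by omega)
  have hxm := lt_of_ne x hx (by omega)
  have hhole' := hhole (min y (m - 1)) (range_sub (Finset.mem_range.2 (by omega))) (min_le_left _ _)
  omega

end RangeDivisor

lemma numDivisors_range {N : ℕ} (hN : 0 < N) :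
    numDivisors (Finset.range N) = {B | RangeDivisor N B}.ncard := by
  unfold numDivisors
  congr 1
  ext B
  exact RangeDivisor.exists_range_eq_add_iff hN

theorem stmt12 (k : ℕ) (hk : 1 ≤ k) :
    numDivisors (Finset.range (k + 1)) ≤ 2 * numDivisors (Finset.range k) ∧
      (1 < k → numDivisors (Finset.range (k + 1)) < 2 * numDivisors (Finset.range k)) := by
  rw [numDivisors_range k.succ_pos, numDivisors_range hk]
  set D := {B | RangeDivisor k B}
  set D' := {B | RangeDivisor (k + 1) B}
  have hD : D.Finite := RangeDivisor.setOf_finite hk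
  have hinj : InjOn eraseMax (D' \ D) := fun B₁ hB₁ B₂ hB₂ he => by
    have hsup := le_antisymm (RangeDivisor.sup_le_of_eraseMax_eq hB₂.1.1 hB₂.2 hB₁.1 he.symm)
      (RangeDivisor.sup_le_of_eraseMax_eq hB₁.1.1 hB₁.2 hB₂.1 he)
    rw [← insert_sup_eraseMax ⟨0, hB₁.1.1⟩, ← insert_sup_eraseMax ⟨0, hB₂.1.1⟩, he, hsup]
  have hcount : ∀ U ⊆ D, MapsTo eraseMax (D' \ D) U → D'.ncard ≤ U.ncard + D.ncard :=
    fun U hU hmaps => (ncard_le_ncard_sdiff_add_ncard D' D hD).trans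
      (Nat.add_le_add_right (ncard_le_ncard_of_injOn _ hmaps hinj (hD.subset hU)) _)
  have hmaps : MapsTo eraseMax (D' \ D) D := fun B hB =>
    RangeDivisor.eraseMax_of_not hB.1 hB.2
  refine ⟨by linarith [hcount D subset_rfl hmaps], fun hk1 => ?_⟩
  have hmissed : Finset.range (1 + k % 2) ∈ D := RangeDivisor.range (by omega) (by omega)
  have := hcount (D \ {Finset.range (1 + k % 2)}) sdiff_subset fun B hB =>
    ⟨hmaps hB, RangeDivisor.eraseMax_ne_range (by omega) (by omega) hB.1 hB.2⟩
  linarith [ncard_sdiff_singleton_lt_of_mem hmissed hD]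
end

section
/- For k ≥ 1 and any nonempty A ⊆ {1,...,k} with A ≠ {1,...,k}, we have d({1,...,k}) ≥ d(A), where d counts sumset divisors; moreover the inequality is strict when k ≠ 3. -/
open Pointwise

/-!
Write `A = {m} + S` with `m = min A`, so that `0 ∈ S ⊆ range n` where `m + n = k + 1`, and let
`D n` be the number of divisors of `range n`. Every divisor of `A` is `{t} + B` with `t ≤ m` and
`B` a divisor of `S`, so `d A ≤ (m + 1) * d S`. If `S = B + C`, adding to `B` every point below
`max B` that is missing from `S` yields a divisor of `range n` which meets `S` exactly in `B` and is
never `range (h + 1)` with `h ∉ S`; hence `d S ≤ D n`, strictly unless `S = range n`. Conversely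
the sets `{t} + B` with `t ≤ 1` and `B` a divisor of `range k` give `2 * D k ≤ d {1, …, k}`.
Finally `D (n + 1) + D n ≤ D (n + 2)` and `D (n + 1) < 2 * D n` for `n ≥ 2` give
`3 * D n ≤ 2 * D (n + 1)`, strictly unless `n = 2`, hence `(m + 1) * D n ≤ 2 * D k`; equality can
only survive for the interval `A = {2, 3}` inside `{1, 2, 3}`.
-/

open Finset

lemma mem_singleton_add_iff {t x : ℕ} {X : Finset ℕ} :
    x ∈ ({t} : Finset ℕ) + X ↔ ∃ y ∈ X, t + y = x := by
  simp [mem_add]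

lemma zero_mem_add_iff {B C : Finset ℕ} : 0 ∈ B + C ↔ 0 ∈ B ∧ 0 ∈ C := by
  constructor
  · intro h
    obtain ⟨b, hb, c, hc, hbc⟩ := mem_add.1 h
    obtain ⟨rfl, rfl⟩ : b = 0 ∧ c = 0 := by omega
    exact ⟨hb, hc⟩
  · rintro ⟨hB, hC⟩
    exact add_mem_add hB hC

lemma Finset.Nonempty.exists_eq_singleton_add {B : Finset ℕ} (hB : B.Nonempty) :
    ∃ t B₀, 0 ∈ B₀ ∧ B = {t} + B₀ := by
  refine ⟨B.min' hB, B.image (· - B.min' hB), mem_image.2 ⟨_, B.min'_mem hB, Nat.sub_self _⟩, ?_⟩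
  ext x
  simp only [mem_singleton_add_iff, mem_image, exists_exists_and_eq_and]
  exact ⟨fun hx => ⟨x, hx, by have := B.min'_le x hx; omega⟩,
    fun ⟨y, hy, hyx⟩ => by have := B.min'_le y hy; rwa [← hyx, Nat.add_sub_cancel' this]⟩

lemma eq_and_eq_of_singleton_add_eq {a b : ℕ} {X Y : Finset ℕ} (hX : 0 ∈ X) (hY : 0 ∈ Y)
    (h : {a} + X = {b} + Y) : a = b ∧ X = Y := by
  have hab : b ≤ a := by
    obtain ⟨y, -, hy⟩ := mem_singleton_add_iff.1 (h ▸ mem_singleton_add_iff.2 ⟨0, hX, rfl⟩)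
    omega
  have hba : a ≤ b := by
    obtain ⟨x, -, hx⟩ := mem_singleton_add_iff.1 (h ▸ mem_singleton_add_iff.2 ⟨0, hY, rfl⟩)
    omega
  obtain rfl : a = b := le_antisymm hba hab
  refine ⟨rfl, ?_⟩
  ext x
  simpa [mem_singleton_add_iff] using congrArg (a + x ∈ ·) h

lemma Icc_one_eq_singleton_add_range (k : ℕ) : Icc 1 k = {1} + range k := by
  ext x
  simp only [mem_Icc, mem_singleton_add_iff, mem_range]
  exact ⟨fun h => ⟨x - 1, by omega, by omega⟩, fun ⟨y, hy, hyx⟩ => by omega⟩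

lemma finite_setOf_add_eq {A : Finset ℕ} (hA : A.Nonempty) :
    {B : Finset ℕ | ∃ C, A = B + C}.Finite := by
  refine (range (A.sup id + 1)).powerset.finite_toSet.subset ?_
  rintro B ⟨C, rfl⟩
  obtain ⟨c, hc⟩ := hA.of_add_right
  simp only [coe_powerset, Set.mem_preimage, Set.mem_powerset_iff, coe_subset]
  intro b hb
  have : b + c ≤ (B + C).sup id := le_sup (f := id) (add_mem_add hb hc)
  simp only [mem_range]
  omega

lemma exists_of_singleton_add_eq_add {m : ℕ} {S B C : Finset ℕ} (h0 : 0 ∈ S)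
    (h : {m} + S = B + C) : ∃ t ≤ m, ∃ B₀, (∃ C₀, S = B₀ + C₀) ∧ B = {t} + B₀ := by
  have hBC : (B + C).Nonempty := h ▸ ⟨m, mem_singleton_add_iff.2 ⟨0, h0, rfl⟩⟩
  obtain ⟨t, B₀, hB₀, rfl⟩ := hBC.of_add_left.exists_eq_singleton_add
  obtain ⟨s, C₀, hC₀, rfl⟩ := hBC.of_add_right.exists_eq_singleton_add
  rw [add_add_add_comm, singleton_add_singleton] at h
  obtain ⟨hm, hS⟩ := eq_and_eq_of_singleton_add_eq h0 (zero_mem_add_iff.2 ⟨hB₀, hC₀⟩) h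
  exact ⟨t, by omega, B₀, ⟨C₀, hS⟩, rfl⟩

lemma numDivisors_singleton_add_le (m : ℕ) {S : Finset ℕ} (h0 : 0 ∈ S) :
    numDivisors ({m} + S) ≤ (m + 1) * numDivisors S := by
  set divS := {B : Finset ℕ | ∃ C, S = B + C}
  have hdivS : divS.Finite := finite_setOf_add_eq ⟨0, h0⟩
  have hsub : {B : Finset ℕ | ∃ C, {m} + S = B + C} ⊆
      (fun p : ℕ × Finset ℕ => {p.1} + p.2) '' ((range (m + 1) : Set ℕ) ×ˢ divS) := by
    rintro B ⟨C, h⟩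
    obtain ⟨t, ht, B₀, hB₀, rfl⟩ := exists_of_singleton_add_eq_add h0 h
    exact ⟨(t, B₀), ⟨by simpa using Nat.lt_succ_of_le ht, hB₀⟩, rfl⟩
  calc numDivisors ({m} + S)
      ≤ ((fun p : ℕ × Finset ℕ => {p.1} + p.2) '' ((range (m + 1) : Set ℕ) ×ˢ divS)).ncard :=
        Set.ncard_le_ncard hsub (((finite_toSet _).prod hdivS).image _)
    _ ≤ ((range (m + 1) : Set ℕ) ×ˢ divS).ncard := Set.ncard_image_le ((finite_toSet _).prod hdivS)
    _ = (m + 1) * numDivisors S := by rw [Set.ncard_prod, Set.ncard_coe_finset, card_range]; rfl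

/-- For `B ⊆ range n` this says `range n = B + range (n - max B)`: every `x < n` lies at most
`n - 1 - max B` above some element of `B`. -/
def IsRangeDivisor (n : ℕ) (B : Finset ℕ) : Prop :=
  0 ∈ B ∧ ∀ x < n, ∃ b ∈ B, b ≤ x ∧ ∀ y ∈ B, x + y < n + b

instance (n : ℕ) : DecidablePred (IsRangeDivisor n) := by
  unfold IsRangeDivisor; infer_instance

def rangeDivisors (n : ℕ) : Finset (Finset ℕ) :=
  (range n).powerset.filter (IsRangeDivisor n)

lemma mem_rangeDivisors {n : ℕ} {B : Finset ℕ} :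
    B ∈ rangeDivisors n ↔ B ⊆ range n ∧ IsRangeDivisor n B := by
  simp [rangeDivisors]

lemma range_eq_add_of_mem_rangeDivisors {n : ℕ} {B : Finset ℕ} (hB : B ∈ rangeDivisors n) :
    range n = B + range (n - B.sup id) := by
  obtain ⟨hBn, h0, hcover⟩ := mem_rangeDivisors.1 hB
  obtain ⟨β, hβ, hβsup⟩ := exists_mem_eq_sup B ⟨0, h0⟩ id
  have hβn := mem_range.1 (hBn hβ)
  ext x
  simp only [mem_add, mem_range, hβsup, id]
  constructor
  · intro hx
    obtain ⟨b, hb, hbx, hb_gap⟩ := hcover x hx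
    exact ⟨b, hb, x - b, by have := hb_gap β hβ; omega, by omega⟩
  · rintro ⟨b, hb, c, hc, rfl⟩
    have : b ≤ β := (le_sup (f := id) hb).trans_eq hβsup
    omega

lemma range_mem_rangeDivisors {h n : ℕ} (h0 : 0 < h) (hn : h ≤ n) :
    range h ∈ rangeDivisors n := by
  refine mem_rangeDivisors.2 ⟨range_subset_range.2 hn, mem_range.2 h0, fun x hx => ?_⟩
  refine ⟨min x (h - 1), mem_range.2 (by omega), min_le_left _ _, fun y hy => ?_⟩
  have := mem_range.1 hy
  omega

lemma succ_mul_card_rangeDivisors_le_numDivisors (m : ℕ) {n : ℕ} (hn : 0 < n) :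
    (m + 1) * #(rangeDivisors n) ≤ numDivisors ({m} + range n) := by
  rw [← card_range (m + 1), ← card_product, ← Set.ncard_coe_finset]
  refine Set.ncard_le_ncard_of_injOn (fun p => {p.1} + p.2) ?_ ?_
    (finite_setOf_add_eq ⟨m, mem_singleton_add_iff.2 ⟨0, mem_range.2 hn, rfl⟩⟩)
  · rintro ⟨t, B⟩ hp
    obtain ⟨ht, hB⟩ := mem_product.1 hp
    refine ⟨{m - t} + range (n - B.sup id), ?_⟩
    have ht : t + (m - t) = m := by have := mem_range.1 ht; omega
    rw [range_eq_add_of_mem_rangeDivisors hB, add_add_add_comm, singleton_add_singleton, ht]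
  · rintro ⟨t, B⟩ hp ⟨t', B'⟩ hp' h
    have h0 : ∀ {X}, X ∈ rangeDivisors n → 0 ∈ X := fun hX => (mem_rangeDivisors.1 hX).2.1
    obtain ⟨rfl, rfl⟩ := eq_and_eq_of_singleton_add_eq (h0 (mem_product.1 hp).2)
      (h0 (mem_product.1 hp').2) h
    rfl

def fill (S B : Finset ℕ) : Finset ℕ := B ∪ (Iic (B.sup id) \ S)

section fill

variable {n : ℕ} {S B C : Finset ℕ}

lemma fill_mem_rangeDivisors (hS : S ⊆ range n) (h0 : 0 ∈ S) (hSBC : S = B + C) :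
    fill S B ∈ rangeDivisors n := by
  obtain ⟨h0B, h0C⟩ := zero_mem_add_iff.1 (hSBC ▸ h0)
  obtain ⟨β, hβ, hβsup⟩ := exists_mem_eq_sup B ⟨0, h0B⟩ id
  have hBS : B ⊆ S := hSBC ▸ subset_add_left B h0C
  have hle : ∀ y ∈ fill S B, y ≤ β := by
    intro y hy
    rcases mem_union.1 hy with hy | hy
    · exact (le_sup (f := id) hy).trans_eq hβsup
    · simpa [hβsup] using (mem_sdiff.1 hy).1
  have hβn : β < n := mem_range.1 (hS (hBS hβ))
  refine mem_rangeDivisors.2 ⟨fun y hy => mem_range.2 (by have := hle y hy; omega),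
    mem_union_left _ h0B, fun x hx => ?_⟩
  by_cases hxβ : β < x
  · exact ⟨β, mem_union_left _ hβ, hxβ.le, fun y hy => by have := hle y hy; omega⟩
  by_cases hxS : x ∈ S
  · obtain ⟨b, hb, c, hc, rfl⟩ := mem_add.1 (hSBC ▸ hxS)
    have hβc : β + c < n := mem_range.1 (hS (hSBC ▸ add_mem_add hβ hc))
    exact ⟨b, mem_union_left _ hb, by omega, fun y hy => by have := hle y hy; omega⟩
  · refine ⟨x, mem_union_right _ (mem_sdiff.2 ⟨?_, hxS⟩), le_rfl,
      fun y hy => by have := hle y hy; omega⟩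
    simp only [mem_Iic, hβsup, id]
    omega

lemma fill_inter (hSBC : S = B + C) (h0C : 0 ∈ C) : fill S B ∩ S = B := by
  rw [fill, union_inter_distrib_right, sdiff_inter_self, union_empty,
    inter_eq_left.2 (hSBC ▸ subset_add_left B h0C)]

lemma fill_ne_range {h : ℕ} (hhS : h ∉ S) (h0 : 0 ∈ S) (hSBC : S = B + C) :
    fill S B ≠ range (h + 1) := by
  intro hfill
  obtain ⟨h0B, h0C⟩ := zero_mem_add_iff.1 (hSBC ▸ h0)
  obtain ⟨β, hβ, hβsup⟩ := exists_mem_eq_sup B ⟨0, h0B⟩ id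
  have hβh : β ≤ h := Nat.lt_succ_iff.1 (mem_range.1 (hfill ▸ mem_union_left _ hβ))
  have hh : h ∈ fill S B := hfill ▸ self_mem_range_succ h
  have hhB : h ∈ B := by
    rcases mem_union.1 hh with hhB | hhIic
    · exact hhB
    · have : h ≤ β := by simpa [hβsup] using (mem_sdiff.1 hhIic).1
      exact le_antisymm this hβh ▸ hβ
  exact hhS (hSBC ▸ subset_add_left B h0C hhB)

lemma numDivisors_le_card_of_fill_mem (h0 : 0 ∈ S) {E : Finset (Finset ℕ)}
    (hE : ∀ B C, S = B + C → fill S B ∈ E) : numDivisors S ≤ #E := by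
  rw [← Set.ncard_coe_finset]
  refine Set.ncard_le_ncard_of_injOn (fill S) (fun B ⟨C, hSBC⟩ => hE B C hSBC) ?_ (finite_toSet E)
  rintro B ⟨C, hSBC⟩ B' ⟨C', hSBC'⟩ h
  rw [← fill_inter hSBC (zero_mem_add_iff.1 (hSBC ▸ h0)).2,
    ← fill_inter hSBC' (zero_mem_add_iff.1 (hSBC' ▸ h0)).2, h]

lemma numDivisors_le_card_rangeDivisors (hS : S ⊆ range n) (h0 : 0 ∈ S) :
    numDivisors S ≤ #(rangeDivisors n) :=
  numDivisors_le_card_of_fill_mem h0 fun _ _ => fill_mem_rangeDivisors hS h0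

lemma numDivisors_lt_card_rangeDivisors (hS : S ⊆ range n) (h0 : 0 ∈ S) {h : ℕ} (hh : h < n)
    (hhS : h ∉ S) : numDivisors S < #(rangeDivisors n) := by
  have hmem := range_mem_rangeDivisors h.succ_pos hh
  calc numDivisors S ≤ #((rangeDivisors n).erase (range (h + 1))) :=
        numDivisors_le_card_of_fill_mem h0 fun _ _ hSBC =>
          mem_erase.2 ⟨fill_ne_range hhS h0 hSBC, fill_mem_rangeDivisors hS h0 hSBC⟩
    _ < #(rangeDivisors n) := card_erase_lt_of_mem hmem

end fill

section growth

variable {n : ℕ}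

lemma rangeDivisors_subset_succ (n : ℕ) : rangeDivisors n ⊆ rangeDivisors (n + 1) := by
  intro B hB
  obtain ⟨hBn, h0, hcover⟩ := mem_rangeDivisors.1 hB
  obtain ⟨β, hβ, hβsup⟩ := exists_mem_eq_sup B ⟨0, h0⟩ id
  have hβn := mem_range.1 (hBn hβ)
  refine mem_rangeDivisors.2 ⟨hBn.trans (range_subset_range.2 n.le_succ), h0, fun x hx => ?_⟩
  rcases Nat.lt_or_ge x n with hxn | hxn
  · obtain ⟨b, hb, hbx, hgap⟩ := hcover x hxn
    exact ⟨b, hb, hbx, fun y hy => by have := hgap y hy; omega⟩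
  · refine ⟨β, hβ, by omega, fun y hy => ?_⟩
    have : y ≤ β := (le_sup (f := id) hy).trans_eq hβsup
    omega

lemma card_rangeDivisors_strictMono : StrictMono fun n => #(rangeDivisors n) :=
  strictMono_nat_of_lt_succ fun n => card_lt_card <|
    ssubset_of_subset_of_ne (rangeDivisors_subset_succ n) fun h =>
      have := mem_rangeDivisors.1 (h ▸ range_mem_rangeDivisors n.succ_pos le_rfl)
      n.lt_irrefl (mem_range.1 (this.1 (self_mem_range_succ n)))

lemma add_two_le_of_mem_rangeDivisors {B : Finset ℕ} (hB : B ∈ rangeDivisors n)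
    (hne : B ≠ range n) : ∀ b ∈ B, b + 2 ≤ n := by
  obtain ⟨hBn, -, hcover⟩ := mem_rangeDivisors.1 hB
  intro b hb
  have hbn := mem_range.1 (hBn hb)
  by_contra! hlast
  refine hne (hBn.antisymm fun x hx => ?_)
  obtain ⟨c, hc, hcx, hgap⟩ := hcover x (mem_range.1 hx)
  obtain rfl : c = x := by have := hgap b hb; omega
  exact hc

lemma mem_insert_zero_image_add {t x : ℕ} (ht : 0 < t) {X : Finset ℕ} :
    x + t ∈ insert 0 (X.image (· + t)) ↔ x ∈ X := by
  simp only [mem_insert, mem_image, add_left_inj, exists_eq_right]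
  constructor
  · rintro (h | h)
    · omega
    · exact h
  · exact Or.inr

lemma insert_zero_image_add_injective {t : ℕ} (ht : 0 < t) :
    Function.Injective fun X : Finset ℕ => insert 0 (X.image (· + t)) := by
  intro X Y h
  ext x
  rw [← mem_insert_zero_image_add ht, ← mem_insert_zero_image_add ht (X := Y)]
  exact Iff.of_eq (congrArg (x + t ∈ ·) h)

lemma insert_zero_image_add_mem_rangeDivisors {t : ℕ} {Y : Finset ℕ} (hY : Y ∈ rangeDivisors n)
    (hYt : ∀ b ∈ Y, b + t ≤ n) : insert 0 (Y.image (· + t)) ∈ rangeDivisors (n + t) := by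
  obtain ⟨hYn, h0, hcover⟩ := mem_rangeDivisors.1 hY
  have hn : 0 < n := mem_range.1 (hYn h0)
  refine mem_rangeDivisors.2 ⟨fun y hy => ?_, mem_insert_self _ _, fun x hx => ?_⟩
  · simp only [mem_insert, mem_image] at hy
    rcases hy with rfl | ⟨b, hb, rfl⟩
    · exact mem_range.2 (by omega)
    · exact mem_range.2 (by have := mem_range.1 (hYn hb); omega)
  rcases Nat.lt_or_ge x t with hxt | hxt
  · refine ⟨0, mem_insert_self _ _, Nat.zero_le x, fun y hy => ?_⟩
    simp only [mem_insert, mem_image] at hy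
    rcases hy with rfl | ⟨b, hb, rfl⟩
    · omega
    · have := hYt b hb; omega
  · obtain ⟨b, hb, hbx, hgap⟩ := hcover (x - t) (by omega)
    refine ⟨b + t, mem_insert_of_mem (mem_image_of_mem _ hb), by omega, fun y hy => ?_⟩
    simp only [mem_insert, mem_image] at hy
    rcases hy with rfl | ⟨c, hc, rfl⟩
    · omega
    · have := hgap c hc; omega

/-- `X ↦ {0} ∪ (X + 1)` produces divisors containing `1`; `X ↦ {0} ∪ (X + 2)` for
`X ≠ range n`, together with `{0}`, produces divisors avoiding `1`. -/
lemma card_rangeDivisors_succ_add_card_le (n : ℕ) :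
    #(rangeDivisors (n + 1)) + #(rangeDivisors n) ≤ #(rangeDivisors (n + 2)) := by
  rw [← card_filter_add_card_filter_not (fun X => 1 ∈ X) (s := rangeDivisors (n + 2))]
  apply add_le_add
  · refine card_le_card_of_injOn _ (fun Y hY => ?_) (insert_zero_image_add_injective one_pos).injOn
    obtain ⟨hYn, h0, -⟩ := mem_rangeDivisors.1 hY
    have hmem : insert 0 (Y.image (· + 1)) ∈ rangeDivisors (n + 1 + 1) :=
      insert_zero_image_add_mem_rangeDivisors hY fun b hb => mem_range.1 (hYn hb)
    have h1 : 0 + 1 ∈ insert 0 (Y.image (· + 1)) := (mem_insert_zero_image_add one_pos).2 h0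
    exact mem_filter.2 ⟨hmem, h1⟩
  · rcases n.eq_zero_or_pos with rfl | hn
    · exact (show #(rangeDivisors 0) = 0 by decide).trans_le (Nat.zero_le _)
    set raise := fun Y : Finset ℕ => insert 0 (Y.image (· + 2))
    have h2 : ∀ Y ∈ (rangeDivisors n).erase (range n), 2 ∈ raise Y := fun Y hY =>
      (mem_insert_zero_image_add two_pos (x := 0)).2
        (mem_rangeDivisors.1 (mem_of_mem_erase hY)).2.1
    calc #(rangeDivisors n)
        = #(((rangeDivisors n).erase (range n)).image raise) + 1 := by
          rw [card_image_of_injective _ (insert_zero_image_add_injective two_pos),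
            card_erase_add_one (range_mem_rangeDivisors hn le_rfl)]
      _ = #(insert {0} (((rangeDivisors n).erase (range n)).image raise)) := by
          refine (card_insert_of_notMem fun h => ?_).symm
          obtain ⟨Y, hY, hY0⟩ := mem_image.1 h
          simpa [hY0] using h2 Y hY
      _ ≤ #(filter (fun X => 1 ∉ X) (rangeDivisors (n + 2))) := by
          refine card_le_card (insert_subset (mem_filter.2 ⟨?_, by simp⟩) fun X hX => ?_)
          · simpa using range_mem_rangeDivisors one_pos (by omega : 1 ≤ n + 2)
          obtain ⟨Y, hY, rfl⟩ := mem_image.1 hX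
          obtain ⟨hne, hY⟩ := mem_erase.1 hY
          refine mem_filter.2 ⟨insert_zero_image_add_mem_rangeDivisors hY
            (add_two_le_of_mem_rangeDivisors hY hne), ?_⟩
          simp [raise]

lemma mem_image_pred_iff {x : ℕ} (hx : 2 ≤ x) {X : Finset ℕ} :
    x - 1 ∈ X.image (· - 1) ↔ x ∈ X := by
  refine ⟨fun h => ?_, mem_image_of_mem _⟩
  obtain ⟨y, hy, hyx⟩ := mem_image.1 h
  obtain rfl : y = x := by omega
  exact hy

lemma image_pred_mem_rangeDivisors (hn : 0 < n) {X : Finset ℕ}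
    (hX : X ∈ rangeDivisors (n + 1)) : X.image (· - 1) ∈ rangeDivisors n := by
  obtain ⟨hXn, h0, hcover⟩ := mem_rangeDivisors.1 hX
  refine mem_rangeDivisors.2 ⟨fun y hy => ?_, mem_image.2 ⟨0, h0, rfl⟩, fun x hx => ?_⟩
  · obtain ⟨z, hz, rfl⟩ := mem_image.1 hy
    exact mem_range.2 (by have := mem_range.1 (hXn hz); omega)
  · obtain ⟨b, hb, hbx, hgap⟩ := hcover (x + 1) (by omega)
    refine ⟨b - 1, mem_image_of_mem _ hb, by omega, fun y hy => ?_⟩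
    obtain ⟨z, hz, rfl⟩ := mem_image.1 hy
    have := hgap z hz
    omega

/-- `X ↦ (X - 1, 1 ∈ X)` is injective on sets containing `0` (as `0 - 1 = 0`), and for `n ≥ 2`
it misses `(range n, false)`. -/
lemma card_rangeDivisors_succ_lt (hn : 2 ≤ n) :
    #(rangeDivisors (n + 1)) < 2 * #(rangeDivisors n) := by
  set lower := fun X : Finset ℕ => (X.image (· - 1), decide (1 ∈ X))
  have hmaps : Set.MapsTo lower (rangeDivisors (n + 1))
      ((rangeDivisors n ×ˢ univ).erase (range n, false)) := by
    intro X hX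
    refine mem_erase.2 ⟨fun h => ?_,
      mem_product.2 ⟨image_pred_mem_rangeDivisors (by omega) hX, mem_univ _⟩⟩
    simp only [lower, Prod.mk.injEq, decide_eq_false_iff_not] at h
    obtain ⟨himage, h1⟩ := h
    obtain ⟨-, -, hcover⟩ := mem_rangeDivisors.1 hX
    have hnX : n ∈ X := (mem_image_pred_iff hn).1 (himage ▸ mem_range.2 (by omega))
    obtain ⟨b, hb, hb1, hgap⟩ := hcover 1 (by omega)
    have hb0 : b = 0 := by
      rcases Nat.le_one_iff_eq_zero_or_eq_one.1 hb1 with h | rfl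
      · exact h
      · exact absurd hb h1
    have := hgap n hnX
    omega
  have hinj : Set.InjOn lower (rangeDivisors (n + 1)) := by
    intro X hX Y hY h
    simp only [lower, Prod.mk.injEq, decide_eq_decide] at h
    obtain ⟨himage, h1⟩ := h
    ext x
    match x with
    | 0 => exact iff_of_true (mem_rangeDivisors.1 hX).2.1 (mem_rangeDivisors.1 hY).2.1
    | 1 => exact h1
    | x + 2 => rw [← mem_image_pred_iff (by omega), himage, mem_image_pred_iff (by omega)]
  calc #(rangeDivisors (n + 1))
      ≤ #((rangeDivisors n ×ˢ univ).erase (range n, false)) :=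
        card_le_card_of_injOn lower hmaps hinj
    _ < #(rangeDivisors n ×ˢ (univ : Finset Bool)) :=
        card_erase_lt_of_mem (mem_product.2
          ⟨range_mem_rangeDivisors (by omega) le_rfl, mem_univ _⟩)
    _ = 2 * #(rangeDivisors n) := by rw [card_product, card_univ, Fintype.card_bool, mul_comm]

lemma card_rangeDivisors_one : #(rangeDivisors 1) = 1 := by decide

lemma card_rangeDivisors_two : #(rangeDivisors 2) = 2 := by decide

lemma card_rangeDivisors_three : #(rangeDivisors 3) = 3 := by decide

lemma three_mul_card_rangeDivisors_lt (hn : 0 < n) (hn2 : n ≠ 2) :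
    3 * #(rangeDivisors n) < 2 * #(rangeDivisors (n + 1)) := by
  obtain rfl | hn3 : n = 1 ∨ 3 ≤ n := by omega
  · rw [card_rangeDivisors_one, card_rangeDivisors_two]
    norm_num
  obtain ⟨m, rfl⟩ : ∃ m, n = m + 1 := ⟨n - 1, by omega⟩
  have hsum := card_rangeDivisors_succ_add_card_le m
  have hlt := card_rangeDivisors_succ_lt (n := m) (by omega)
  show 3 * #(rangeDivisors (m + 1)) < 2 * #(rangeDivisors (m + 2))
  omega

lemma three_mul_card_rangeDivisors_le (hn : 0 < n) :
    3 * #(rangeDivisors n) ≤ 2 * #(rangeDivisors (n + 1)) := by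
  rcases eq_or_ne n 2 with rfl | hn2
  · rw [card_rangeDivisors_two, card_rangeDivisors_three]
  · exact (three_mul_card_rangeDivisors_lt hn hn2).le

lemma two_add_mul_card_rangeDivisors_le (hn : 0 < n) (j : ℕ) :
    (j + 2) * #(rangeDivisors n) ≤ 2 * #(rangeDivisors (n + j)) := by
  induction j with
  | zero => rfl
  | succ j ih =>
    have hmono : #(rangeDivisors n) ≤ #(rangeDivisors (n + j)) :=
      card_rangeDivisors_strictMono.monotone (Nat.le_add_right n j)
    have hstep := three_mul_card_rangeDivisors_le (n := n + j) (by omega)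
    rw [← add_assoc]
    linarith

lemma two_add_mul_card_rangeDivisors_lt (hn : 0 < n) {j : ℕ} (hj : 0 < j)
    (hjn : (j, n) ≠ (1, 2)) : (j + 2) * #(rangeDivisors n) < 2 * #(rangeDivisors (n + j)) := by
  obtain ⟨i, rfl⟩ : ∃ i, j = i + 1 := ⟨j - 1, by omega⟩
  rcases i.eq_zero_or_pos with rfl | hi
  · exact three_mul_card_rangeDivisors_lt hn fun h => hjn (by rw [h])
  have hlt : #(rangeDivisors n) < #(rangeDivisors (n + i)) :=
    card_rangeDivisors_strictMono (Nat.lt_add_of_pos_right hi)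
  have hle := two_add_mul_card_rangeDivisors_le hn i
  have hstep := three_mul_card_rangeDivisors_le (n := n + i) (by omega)
  rw [← add_assoc]
  linarith

end growth

theorem stmt14_general (k : ℕ) (A : Finset ℕ) (hA : A.Nonempty)
    (hsub : A ⊆ Finset.Icc 1 k) (hne : A ≠ Finset.Icc 1 k) :
    numDivisors A ≤ numDivisors (Finset.Icc 1 k) ∧
      (k ≠ 3 → numDivisors A < numDivisors (Finset.Icc 1 k)) := by
  obtain ⟨m, S, h0S, rfl⟩ := hA.exists_eq_singleton_add
  have hm : 1 ≤ m ∧ m ≤ k := by simpa using hsub (mem_singleton_add_iff.2 ⟨0, h0S, rfl⟩)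
  obtain ⟨j, rfl⟩ : ∃ j, m = j + 1 := ⟨m - 1, by omega⟩
  obtain ⟨n, rfl⟩ : ∃ n, k = n + j := ⟨k - j, by omega⟩
  have hn : 0 < n := by omega
  have hSn : S ⊆ range n := fun s hs => mem_range.2 <| by
    have := mem_Icc.1 (hsub (mem_singleton_add_iff.2 ⟨s, hs, rfl⟩))
    omega
  have hlower : 2 * #(rangeDivisors (n + j)) ≤ numDivisors (Icc 1 (n + j)) := by
    rw [Icc_one_eq_singleton_add_range]
    exact succ_mul_card_rangeDivisors_le_numDivisors 1 (by omega)
  have hupper : numDivisors ({j + 1} + S) ≤ (j + 2) * numDivisors S :=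
    numDivisors_singleton_add_le (j + 1) h0S
  have hgrowth := two_add_mul_card_rangeDivisors_le hn j
  by_cases hS : S = range n
  · subst hS
    have hj : 0 < j := Nat.pos_of_ne_zero fun hj => hne (by
      subst hj; rw [Icc_one_eq_singleton_add_range]; rfl)
    have hrange : (j + 2) * numDivisors (range n) ≤ (j + 2) * #(rangeDivisors n) :=
      Nat.mul_le_mul_left _ (numDivisors_le_card_rangeDivisors subset_rfl h0S)
    refine ⟨by omega, fun hk3 => ?_⟩
    have := two_add_mul_card_rangeDivisors_lt hn hj (by rintro ⟨⟩; omega)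
    omega
  · obtain ⟨h, hh, hhS⟩ : ∃ h < n, h ∉ S := by
      by_contra! hall
      exact hS (hSn.antisymm fun x hx => hall x (mem_range.1 hx))
    have hhole : (j + 2) * numDivisors S < (j + 2) * #(rangeDivisors n) :=
      Nat.mul_lt_mul_of_pos_left (numDivisors_lt_card_rangeDivisors hSn h0S hh hhS) (by omega)
    exact ⟨by omega, fun _ => by omega⟩

theorem stmt14 (k : ℕ) (hk : 1 ≤ k) (A : Finset ℕ) (hA : A.Nonempty)
    (hsub : A ⊆ Finset.Icc 1 k) (hne : A ≠ Finset.Icc 1 k) :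
    numDivisors A ≤ numDivisors (Finset.Icc 1 k) ∧
      (k ≠ 3 → numDivisors A < numDivisors (Finset.Icc 1 k)) :=
  stmt14_general k A hA hsub hne
end

section
/- Let H(n,m) denote the number of headstrong compositions of n with exactly m parts. Then H(n,m) = 0 for m > n, H(n,n) = 1, H(n,1) = 1, and for n > m > 1, H(n,m) = Σ_{j=1}^{n-m} H(n-m, j) · C(m-1, j-1), where C denotes the binomial coefficient. -/
/-- `H n m`: the number of headstrong compositions of `n` with exactly `m` parts,
i.e. lists of positive integers of length `m` summing to `n` whose first part is
greater than or equal to every part. -/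
noncomputable def H (n m : ℕ) : ℕ :=
  {l : List ℕ | l.sum = n ∧ l.length = m ∧ (∀ x ∈ l, 0 < x) ∧ ∀ x ∈ l, x ≤ l.headI}.ncard

/-!
Subtracting 1 from every part turns a headstrong composition of `n` with `m` parts into a
headstrong list of `m` nonnegative parts summing to `n - m`. When `m < n` its first part is
positive, so deleting the zeros leaves a headstrong composition of `n - m`, with `j` parts say,
and the list is recovered from it by choosing which `j - 1` of the last `m - 1` places are
nonzero: there are `C(m - 1, j - 1)` choices.
-/

section Paddings

variable {α : Type*} [DecidableEq α]

def paddings (a : α) (k : ℕ) (u : List α) : Set (List α) :=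
  {t | t.length = k ∧ t.filter (· ≠ a) = u}

theorem paddings_zero_nil (a : α) : paddings a 0 [] = {[]} := by
  ext t
  simp +contextual [paddings, List.length_eq_zero_iff]

theorem paddings_zero_cons (a x : α) (v : List α) : paddings a 0 (x :: v) = ∅ := by
  ext t
  simp +contextual [paddings, List.length_eq_zero_iff]

theorem paddings_succ_nil (a : α) (k : ℕ) :
    paddings a (k + 1) [] = List.cons a '' paddings a k [] := by
  ext (_ | ⟨b, t⟩)
  · simp [paddings]
  · by_cases hb : b = a
    · simp [paddings, hb]
    · simp [paddings, hb, Ne.symm hb]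

theorem paddings_succ_cons {a x : α} (hx : x ≠ a) (k : ℕ) (v : List α) :
    paddings a (k + 1) (x :: v) =
      List.cons a '' paddings a k (x :: v) ∪ List.cons x '' paddings a k v := by
  ext (_ | ⟨b, t⟩)
  · simp [paddings]
  · by_cases hb : b = a
    · simp [paddings, hb, hx]
    · simp [paddings, hb, Ne.symm hb, and_comm, and_left_comm, eq_comm (a := x)]

theorem encard_paddings (k : ℕ) {a : α} {u : List α} (ha : a ∉ u) :
    (paddings a k u).encard = k.choose u.length := by
  induction k generalizing u with
  | zero =>
    cases u with
    | nil => simp [paddings_zero_nil]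
    | cons x v => simp [paddings_zero_cons]
  | succ k ih =>
    cases u with
    | nil => simp [paddings_succ_nil, List.cons_injective.encard_image, ih]
    | cons x v =>
      have hx : x ≠ a := fun h => ha (h ▸ List.mem_cons_self)
      rw [paddings_succ_cons hx, Set.encard_union_eq, List.cons_injective.encard_image,
        List.cons_injective.encard_image, ih ha, ih (fun h => ha (List.mem_cons_of_mem x h))]
      · simp [Nat.choose_succ_succ', add_comm]
      · exact Set.disjoint_left.2 fun _ ⟨_, _, h⟩ ⟨_, _, h'⟩ =>
          hx (List.cons_eq_cons.1 (h'.trans h.symm)).1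

theorem ncard_paddings (k : ℕ) {a : α} {u : List α} (ha : a ∉ u) :
    (paddings a k u).ncard = k.choose u.length := by
  rw [Set.ncard_def, encard_paddings k ha, ENat.toNat_natCast]

end Paddings

theorem List.sum_filter_ne_zero {M : Type*} [AddMonoid M] [DecidableEq M] (l : List M) :
    (l.filter (· ≠ 0)).sum = l.sum := by
  induction l with
  | nil => rfl
  | cons x t ih => by_cases hx : x = 0 <;> simp_all

theorem Set.ncard_eq_sum_ncard_fiberwise {α β : Type*} {s : Set α} (hs : s.Finite)
    {f : α → β} {t : Finset β} (hf : Set.MapsTo f s t) :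
    s.ncard = ∑ b ∈ t, (s ∩ f ⁻¹' {b}).ncard := by
  classical
  rw [Set.ncard_eq_toFinset_card s hs, Finset.card_eq_sum_card_fiberwise (by simpa using hf)]
  refine Finset.sum_congr rfl fun b _ => ?_
  rw [Set.ncard_eq_toFinset_card _ (hs.inter_of_left _)]
  congr 1
  ext
  simp

namespace Headstrong

def compositions (n m : ℕ) : Set (List ℕ) :=
  {l | l.sum = n ∧ l.length = m ∧ (∀ x ∈ l, 0 < x) ∧ ∀ x ∈ l, x ≤ l.headI}

theorem H_eq_ncard (n m : ℕ) : H n m = (compositions n m).ncard := rfl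

def weakCompositions (k m : ℕ) : Set (List ℕ) :=
  {l | l.sum = k ∧ l.length = m ∧ ∀ x ∈ l, x ≤ l.headI}

theorem compositions_finite (n m : ℕ) : (compositions n m).Finite :=
  (Set.finite_range (Composition.blocks : Composition n → List ℕ)).subset
    fun l hl => ⟨⟨l, hl.2.2.1 _, hl.1⟩, rfl⟩

theorem map_succ_mem_compositions_iff {k m : ℕ} {l : List ℕ} :
    l.map (· + 1) ∈ compositions (k + m) m ↔ l ∈ weakCompositions k m := by
  have hsum : (l.map (· + 1)).sum = l.sum + l.length := by simp [List.sum_map_add]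
  have hparts : (∀ x ∈ l.map (· + 1), 0 < x ∧ x ≤ (l.map (· + 1)).headI) ↔
      ∀ x ∈ l, x ≤ l.headI := by
    cases l <;> simp
  rw [compositions, weakCompositions, Set.mem_ofPred_eq, Set.mem_ofPred_eq, hsum, List.length_map]
  constructor
  · rintro ⟨hk, rfl, hpos, hle⟩
    exact ⟨by omega, rfl, hparts.1 fun x hx => ⟨hpos x hx, hle x hx⟩⟩
  · rintro ⟨rfl, rfl, hle⟩
    exact ⟨rfl, rfl, fun x hx => (hparts.2 hle x hx).1, fun x hx => (hparts.2 hle x hx).2⟩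

theorem compositions_eq_image (k m : ℕ) :
    compositions (k + m) m = List.map (· + 1) '' weakCompositions k m := by
  ext l
  refine ⟨fun hl => ?_, fun ⟨l', hl', hl⟩ => hl ▸ map_succ_mem_compositions_iff.2 hl'⟩
  have hpred : (l.map (· - 1)).map (· + 1) = l := by
    rw [List.map_map]
    exact List.map_congr_left (fun x hx => Nat.sub_add_cancel (hl.2.2.1 x hx)) |>.trans l.map_id
  exact ⟨_, map_succ_mem_compositions_iff.1 (by rwa [hpred]), hpred⟩

theorem map_succ_injective : Function.Injective (List.map (· + 1)) :=
  List.map_injective_iff.2 (add_left_injective 1)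

theorem H_add_eq_ncard_weakCompositions (k m : ℕ) :
    H (k + m) m = (weakCompositions k m).ncard := by
  rw [H_eq_ncard, compositions_eq_image, Set.ncard_image_of_injective _ map_succ_injective]

theorem weakCompositions_finite (k m : ℕ) : (weakCompositions k m).Finite :=
  ((compositions_finite (k + m) m).preimage map_succ_injective.injOn).subset
    fun _ hl => map_succ_mem_compositions_iff.2 hl

theorem H_eq_zero_of_lt {n m : ℕ} (h : n < m) : H n m = 0 := by
  have hempty : compositions n m = ∅ :=
    Set.eq_empty_of_forall_notMem fun l ⟨hsum, hlen, hpos, _⟩ =>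
      absurd (l.length_le_sum_of_one_le hpos) (by omega)
  rw [H_eq_ncard, hempty, Set.ncard_empty]

theorem weakCompositions_zero (n : ℕ) : weakCompositions 0 n = {List.replicate n 0} := by
  ext l
  refine ⟨fun ⟨hsum, hlen, _⟩ => List.eq_replicate_iff.2 ⟨hlen, List.sum_eq_zero_iff.1 hsum⟩, ?_⟩
  rintro rfl
  exact ⟨by simp, by simp, fun x hx => by simp [List.eq_of_mem_replicate hx]⟩

theorem H_self (n : ℕ) : H n n = 1 := by
  simpa [weakCompositions_zero] using H_add_eq_ncard_weakCompositions 0 n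

theorem compositions_one {n : ℕ} (hn : 0 < n) : compositions n 1 = {[n]} := by
  ext l
  refine ⟨fun ⟨hsum, hlen, _⟩ => ?_, fun h => h ▸ ⟨by simp, rfl, by simpa using hn, by simp⟩⟩
  obtain ⟨a, rfl⟩ := List.length_eq_one_iff.1 hlen
  simpa using hsum

theorem H_one {n : ℕ} (hn : 0 < n) : H n 1 = 1 := by
  rw [H_eq_ncard, compositions_one hn, Set.ncard_singleton]

theorem filter_ne_zero_mem_compositions {k m : ℕ} (hk : 0 < k) {l : List ℕ}
    (hl : l ∈ weakCompositions k m) :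
    l.filter (· ≠ 0) ∈ compositions k (l.filter (· ≠ 0)).length := by
  obtain ⟨hsum, -, hhead⟩ := hl
  cases l with
  | nil => exact absurd hsum hk.ne
  | cons b t =>
    have hb : b ≠ 0 := by
      rintro rfl
      have hzero : (0 :: t).sum = 0 := List.sum_eq_zero fun x hx => Nat.le_zero.1 (hhead x hx)
      omega
    refine ⟨by rw [List.sum_filter_ne_zero, hsum], rfl, fun x hx => ?_, fun x hx => ?_⟩
    · exact Nat.pos_of_ne_zero (by simpa using (List.mem_filter.1 hx).2)
    · simpa [List.filter_cons, hb] using hhead x (List.mem_of_mem_filter hx)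

theorem length_mem_Icc_of_mem_compositions {k j : ℕ} (hk : 0 < k) {u : List ℕ}
    (hu : u ∈ compositions k j) : j ∈ Finset.Icc 1 k := by
  obtain ⟨hsum, rfl, hpos, -⟩ := hu
  have hne : u ≠ [] := by rintro rfl; exact hk.ne hsum
  exact Finset.mem_Icc.2 ⟨List.length_pos_iff.2 hne, hsum ▸ u.length_le_sum_of_one_le hpos⟩

theorem weakCompositions_inter_filter_eq {k j m a : ℕ} {v : List ℕ}
    (hu : a :: v ∈ compositions k j) :
    weakCompositions k (m + 1) ∩ (fun l => l.filter (· ≠ 0)) ⁻¹' {a :: v} =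
      List.cons a '' paddings 0 m v := by
  obtain ⟨hsum, -, hpos, hhead⟩ := hu
  have ha : a ≠ 0 := (hpos a List.mem_cons_self).ne'
  ext l
  constructor
  · rintro ⟨⟨-, hlen, hle⟩, hf⟩
    obtain ⟨b, t, rfl⟩ := List.exists_cons_of_length_eq_add_one hlen
    simp only [Set.mem_preimage, Set.mem_singleton_iff] at hf
    by_cases hb : b = 0
    · subst hb
      rw [List.filter_cons_of_neg (by simp)] at hf
      have ha_le : a ≤ 0 :=
        hle a (List.mem_cons_of_mem 0 (List.mem_of_mem_filter (hf ▸ List.mem_cons_self)))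
      exact absurd (Nat.le_zero.1 ha_le) ha
    · rw [List.filter_cons_of_pos (by simpa using hb), List.cons.injEq] at hf
      obtain ⟨rfl, hf⟩ := hf
      exact ⟨t, ⟨by simpa using hlen, hf⟩, rfl⟩
  · rintro ⟨t, ⟨hlen, hf⟩, rfl⟩
    have hfa : (a :: t).filter (· ≠ 0) = a :: v := by
      rw [List.filter_cons_of_pos (by simpa using ha), hf]
    refine ⟨⟨?_, by simpa using hlen, fun x hx => ?_⟩, hfa⟩
    · rw [← List.sum_filter_ne_zero, hfa, hsum]
    · rcases List.mem_cons.1 hx with rfl | hx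
      · exact le_rfl
      by_cases hx0 : x = 0
      · simp [hx0]
      exact hhead x (List.mem_cons_of_mem a (hf ▸ List.mem_filter.2 ⟨hx, by simpa using hx0⟩))

theorem ncard_weakCompositions_inter_filter_eq {k j m : ℕ} (hk : 0 < k) {u : List ℕ}
    (hu : u ∈ compositions k j) :
    (weakCompositions k (m + 1) ∩ (fun l => l.filter (· ≠ 0)) ⁻¹' {u}).ncard =
      m.choose (j - 1) := by
  obtain ⟨a, v, rfl⟩ := List.exists_cons_of_ne_nil (l := u) (by rintro rfl; exact hk.ne hu.1)
  rw [weakCompositions_inter_filter_eq hu, Set.ncard_image_of_injective _ List.cons_injective,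
    ncard_paddings _ fun h => (hu.2.2.1 0 (List.mem_cons_of_mem a h)).false, ← hu.2.1]
  rfl

theorem ncard_weakCompositions_succ {k : ℕ} (hk : 0 < k) (m : ℕ) :
    (weakCompositions k (m + 1)).ncard = ∑ j ∈ Finset.Icc 1 k, H k j * m.choose (j - 1) := by
  set strip : List ℕ → List ℕ := fun l => l.filter (· ≠ 0)
  have hs := weakCompositions_finite k (m + 1)
  rw [Set.ncard_eq_sum_ncard_fiberwise hs (f := fun l => (strip l).length)
    fun l hl => length_mem_Icc_of_mem_compositions hk (filter_ne_zero_mem_compositions hk hl)]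
  refine Finset.sum_congr rfl fun j _ => ?_
  have hmaps : Set.MapsTo strip (weakCompositions k (m + 1) ∩ (fun l => (strip l).length) ⁻¹' {j})
      (compositions_finite k j).toFinset := fun l ⟨hl, (hlj : _ = j)⟩ => by
    simpa [strip, ← hlj] using filter_ne_zero_mem_compositions hk hl
  rw [Set.ncard_eq_sum_ncard_fiberwise (hs.inter_of_left _) hmaps, H_eq_ncard,
    Set.ncard_eq_toFinset_card _ (compositions_finite k j)]
  refine Finset.sum_const_nat fun u hu => ?_
  rw [Set.Finite.mem_toFinset] at hu
  have hfiber : strip ⁻¹' {u} ⊆ (fun l => (strip l).length) ⁻¹' {j} := fun l (hl : _ = _) => by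
    simp only [Set.mem_preimage, hl, hu.2.1, Set.mem_singleton_iff]
  rw [Set.inter_assoc, Set.inter_eq_right.2 hfiber, ncard_weakCompositions_inter_filter_eq hk hu]

end Headstrong

theorem stmt17 (n m : ℕ) (hn : 1 ≤ n) :
    (n < m → H n m = 0) ∧ H n n = 1 ∧ H n 1 = 1 ∧
      (1 < m → m < n →
        H n m = ∑ j ∈ Finset.Icc 1 (n - m), H (n - m) j * (m - 1).choose (j - 1)) := by
  refine ⟨Headstrong.H_eq_zero_of_lt, Headstrong.H_self n, Headstrong.H_one hn, fun hm hmn => ?_⟩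
  obtain ⟨k, rfl⟩ : ∃ k, n = k + m := ⟨n - m, by omega⟩
  obtain ⟨m, rfl⟩ : ∃ m', m = m' + 1 := ⟨m - 1, by omega⟩
  rw [Headstrong.H_add_eq_ncard_weakCompositions,
    Headstrong.ncard_weakCompositions_succ (by omega)]
  simp
end

section
/- Let H(n,m) be the number of headstrong compositions of n with m parts, and let b ≥ 2 be an integer. Then for every positive integer n, 2·Σ_{m=1}^{n} H(n,m)·b^m < Σ_{m=1}^{n+1} H(n+1,m)·b^m. -/
open Finset

def headstrongCompositions (n m : ℕ) : Set (List ℕ) :=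
  {l | l.sum = n ∧ l.length = m ∧ (∀ x ∈ l, 0 < x) ∧ ∀ x ∈ l, x ≤ l.headI}

theorem headstrongCompositions_finite (n m : ℕ) : (headstrongCompositions n m).Finite := by
  refine (Set.finite_range fun c : Composition n => c.blocks).subset ?_
  rintro l ⟨hsum, -, hpos, -⟩
  exact ⟨⟨l, fun hx => hpos _ hx, hsum⟩, rfl⟩

theorem append_one_mem_headstrongCompositions {n m : ℕ} {l : List ℕ}
    (hl : l ∈ headstrongCompositions n m) : l ++ [1] ∈ headstrongCompositions (n + 1) (m + 1) := by
  obtain ⟨hsum, hlen, hpos, hhead⟩ := hl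
  have hone_le_head : 1 ≤ (l ++ [1]).headI := by
    cases l with
    | nil => simp
    | cons a t => exact hpos a List.mem_cons_self
  refine ⟨by simp [hsum], by simp [hlen], ?_, ?_⟩
  · simpa [or_imp, forall_and] using hpos
  · intro x hx
    rcases List.mem_append.1 hx with hx | hx
    · cases l with
      | nil => simp at hx
      | cons a t => simpa using hhead x hx
    · rwa [List.mem_singleton.1 hx]

theorem H_le_H_succ_succ (n m : ℕ) : H n m ≤ H (n + 1) (m + 1) :=
  Set.ncard_le_ncard_of_injOn (· ++ [1]) (fun _ => append_one_mem_headstrongCompositions)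
    (fun _ _ _ _ => List.append_cancel_right) (headstrongCompositions_finite _ _)

theorem one_le_H_succ_one (n : ℕ) : 1 ≤ H (n + 1) 1 :=
  (Set.ncard_pos (headstrongCompositions_finite _ _)).2
    ⟨[n + 1], by simp [headstrongCompositions]⟩

theorem Finset.sum_Icc_one_succ {M : Type*} [AddCommMonoid M] (f : ℕ → M) (n : ℕ) :
    ∑ m ∈ Icc 1 (n + 1), f m = f 1 + ∑ m ∈ Icc 1 n, f (m + 1) := by
  induction n with
  | zero => simp
  | succ n ih => rw [sum_Icc_succ_top (by omega), ih, sum_Icc_succ_top (by omega), add_assoc]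

theorem stmt18_general (b : ℕ) (hb : 2 ≤ b) (n : ℕ) :
    2 * ∑ m ∈ Finset.Icc 1 n, H n m * b ^ m <
      ∑ m ∈ Finset.Icc 1 (n + 1), H (n + 1) m * b ^ m := by
  have hH : 0 < H (n + 1) 1 * b ^ 1 := Nat.mul_pos (one_le_H_succ_one n) (by positivity)
  calc 2 * ∑ m ∈ Icc 1 n, H n m * b ^ m
      ≤ b * ∑ m ∈ Icc 1 n, H n m * b ^ m := Nat.mul_le_mul_right _ hb
    _ = ∑ m ∈ Icc 1 n, H n m * b ^ (m + 1) := by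
        rw [mul_sum]
        exact sum_congr rfl fun m _ => by ring
    _ ≤ ∑ m ∈ Icc 1 n, H (n + 1) (m + 1) * b ^ (m + 1) :=
        sum_le_sum fun m _ => Nat.mul_le_mul_right _ (H_le_H_succ_succ n m)
    _ < H (n + 1) 1 * b ^ 1 + ∑ m ∈ Icc 1 n, H (n + 1) (m + 1) * b ^ (m + 1) :=
        Nat.lt_add_of_pos_left hH
    _ = ∑ m ∈ Icc 1 (n + 1), H (n + 1) m * b ^ m := (sum_Icc_one_succ (fun m => H (n + 1) m * b ^ m) n).symm

theorem stmt18 (b : ℕ) (hb : 2 ≤ b) (n : ℕ) (hn : 1 ≤ n) :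
    2 * ∑ m ∈ Finset.Icc 1 n, H n m * b ^ m <
      ∑ m ∈ Finset.Icc 1 (n + 1), H (n + 1) m * b ^ m :=
  stmt18_general b hb n
end
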